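/- arXiv:1512.03717 — 12 statements merged into one kernel-verified Lean document; each statement's English description precedes it below -/
import Mathlib

section
/- Let (X,d) be a metric space, H ⊂ X a closed set, Z a normed linear space and f : H → Z a Baire one function. Then there exists a continuous function g : (X \ H) → Z such that: (NT) for every a ∈ ∂H, lim_{x→a, x∈X\H} ‖g(x) − f(a)‖ · dist(x,H)/d(x,a) = 0; (C) lim_{x→a, x∈X\H} g(x) = f(a) whenever a ∈ ∂H and f is continuous at a; and (B) g is bounded on B(a,r) \ H whenever a ∈ H, r ∈ (0,∞) ∪ {∞} and f is bounded on B(a,12r) ∩ H. -/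
open Filter Topology Metric ENNReal

/-- A function between topological spaces is Baire one if it is the pointwise
limit of a sequence of continuous functions. -/
def IsBaireOne {α β : Type*} [TopologicalSpace α] [TopologicalSpace β] (f : α → β) : Prop :=
  ∃ u : ℕ → α → β, (∀ n, Continuous (u n)) ∧
    ∀ x, Filter.Tendsto (fun n => u n x) Filter.atTop (nhds (f x))

/-!
Write `f = lim fₙ` with `fₙ` continuous. For `b ∈ H` and a scale `t > 0`, a level-`m` certificate
near `b` is a point `y` with `d(y, b) ≤ √t` at which `(fₙ y)_{n ≥ N}` oscillates by at most `2⁻ᵐ`;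
the least such `N` yields the candidate value `f_N y`. If `a` is itself a level-`m` certificate of
index `K`, then for `b` near `a` every certificate of level `≤ m` has index `≤ K`, so continuity of
the single function `f_K` at `a` puts all these candidates `O(2⁻ᵐ)`-close to `f a`. Selecting the
largest level `≤ ⌈1/t⌉` up to which the candidates are mutually coherent thus gives values tending
to `f a` as `t → 0` and `d(b, a) ≤ √t`.

The selected value is pulled back to within `‖f(anchor) - f b‖` of `f b`, where the anchor is the
certificate used, which preserves continuity points, and it is truncated to norm `t^(-1/4)`: when
`d(b, a) > √t` the weight `dist(x, H) / d(x, a)` is `O(√t)`, so such values cannot spoil (NT).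
The values at scales `t ≈ dist(x, H)` and points `b` with `d(x, b) ≲ t` are finally glued by a
partition of unity on `X \ H`.
-/

namespace BaireOneExtension

noncomputable section

section Selection

variable {Y Z : Type*} [PseudoMetricSpace Z]

variable (fs : ℕ → Y → Z) in
def stableSet (n m : ℕ) : Set Y :=
  {y | ∀ i ≥ n, ∀ j ≥ n, dist (fs i y) (fs j y) ≤ (2⁻¹ : ℝ) ^ m}

variable {fs : ℕ → Y → Z} {f : Y → Z}

lemma stableSet_mono {n n' m m' : ℕ} (hn : n ≤ n') (hm : m' ≤ m) :
    stableSet fs n m ⊆ stableSet fs n' m' := fun _ hy i hi j hj =>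
  (hy i (hn.trans hi) j (hn.trans hj)).trans (pow_le_pow_of_le_one (by norm_num) (by norm_num) hm)

lemma exists_mem_stableSet (hfs : ∀ y, CauchySeq fun n => fs n y) (y : Y) (m : ℕ) :
    ∃ n, y ∈ stableSet fs n m := by
  obtain ⟨N, hN⟩ := Metric.cauchySeq_iff.1 (hfs y) _ (pow_pos (by norm_num : (0 : ℝ) < 2⁻¹) m)
  exact ⟨N, fun i hi j hj => (hN i hi j hj).le⟩

lemma dist_le_of_mem_stableSet (hfs : ∀ y, Tendsto (fun n => fs n y) atTop (𝓝 (f y)))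
    {n m j : ℕ} {y : Y} (hy : y ∈ stableSet fs n m) (hj : n ≤ j) :
    dist (fs j y) (f y) ≤ (2⁻¹ : ℝ) ^ m :=
  le_of_tendsto (tendsto_const_nhds.dist (hfs y)) (eventually_atTop.2 ⟨n, hy j hj⟩)

variable [PseudoMetricSpace Y]

variable (fs) in
def certIndex (b : Y) (t : ℝ) (m : ℕ) : ℕ :=
  sInf {n | ∃ y ∈ stableSet fs n m, dist y b ≤ √t}

variable (fs) in
def certPoint (b : Y) (t : ℝ) (m : ℕ) : Y :=
  @Classical.epsilon Y ⟨b⟩ fun y => y ∈ stableSet fs (certIndex fs b t m) m ∧ dist y b ≤ √t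

variable (fs) in
def certValue (b : Y) (t : ℝ) (m : ℕ) : Z :=
  fs (certIndex fs b t m) (certPoint fs b t m)

lemma certIndex_le {b y : Y} {t : ℝ} {n m : ℕ} (hy : y ∈ stableSet fs n m) (hyb : dist y b ≤ √t) :
    certIndex fs b t m ≤ n :=
  Nat.sInf_le ⟨y, hy, hyb⟩

lemma certPoint_spec (hfs : ∀ y, CauchySeq fun n => fs n y) (b : Y) (t : ℝ) (m : ℕ) :
    certPoint fs b t m ∈ stableSet fs (certIndex fs b t m) m ∧
      dist (certPoint fs b t m) b ≤ √t := by
  obtain ⟨n, hn⟩ := exists_mem_stableSet hfs b m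
  have hcert : ∃ n, ∃ y ∈ stableSet fs n m, dist y b ≤ √t :=
    ⟨n, b, hn, by rw [dist_self]; positivity⟩
  exact Classical.epsilon_spec (Nat.sInf_mem hcert)

variable (fs) in
def IsCoherent (b : Y) (t : ℝ) (m : ℕ) : Prop :=
  ∀ μ' ≤ m, ∀ μ ≤ μ', dist (certValue fs b t μ) (certValue fs b t μ') ≤ 3 * (2⁻¹ : ℝ) ^ μ

open Classical in
variable (fs) in
def coherentLevel (b : Y) (t : ℝ) : ℕ :=
  Nat.findGreatest (IsCoherent fs b t) ⌈t⁻¹⌉₊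

variable (fs) in
def anchor (b : Y) (t : ℝ) : Y :=
  certPoint fs b t (coherentLevel fs b t)

variable (fs) in
def selectedValue (b : Y) (t : ℝ) : Z :=
  certValue fs b t (coherentLevel fs b t)

open Classical in
lemma le_coherentLevel {b : Y} {t : ℝ} {m : ℕ} (h : IsCoherent fs b t m) (hm : m ≤ ⌈t⁻¹⌉₊) :
    m ≤ coherentLevel fs b t ∧
      dist (certValue fs b t m) (selectedValue fs b t) ≤ 3 * (2⁻¹ : ℝ) ^ m := by
  have hle : m ≤ coherentLevel fs b t := Nat.le_findGreatest hm h
  exact ⟨hle, Nat.findGreatest_spec (P := IsCoherent fs b t) hm h _ le_rfl _ hle⟩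

lemma dist_anchor_le (hfs : ∀ y, CauchySeq fun n => fs n y) (b : Y) (t : ℝ) :
    dist (anchor fs b t) b ≤ √t :=
  (certPoint_spec hfs b t _).2

lemma tendsto_anchor (hfs : ∀ y, CauchySeq fun n => fs n y) (a : Y) :
    Tendsto (fun q : ℝ × Y => anchor fs q.2 q.1) (𝓝[>] 0 ×ˢ 𝓝 a) (𝓝 a) := by
  refine tendsto_iff_dist_tendsto_zero.2 (squeeze_zero (fun _ => dist_nonneg)
    (fun q => (dist_triangle _ q.2 a).trans (add_le_add (dist_anchor_le hfs q.2 q.1) le_rfl)) ?_)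
  have h₁ : Tendsto (fun q : ℝ × Y => √q.1) (𝓝[>] 0 ×ˢ 𝓝 a) (𝓝 0) := by
    simpa [Function.comp_def] using
      (Real.continuous_sqrt.tendsto 0).comp (tendsto_fst.mono_right nhdsWithin_le_nhds)
  simpa using h₁.add (tendsto_snd.dist (tendsto_const_nhds (x := a)))

lemma dist_selectedValue_anchor_le (hfs : ∀ y, Tendsto (fun n => fs n y) atTop (𝓝 (f y)))
    (b : Y) (t : ℝ) :
    dist (selectedValue fs b t) (f (anchor fs b t)) ≤ (2⁻¹ : ℝ) ^ coherentLevel fs b t :=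
  dist_le_of_mem_stableSet hfs (certPoint_spec (fun y => (hfs y).cauchySeq) b t _).1 le_rfl

lemma dist_certValue_le (hfs : ∀ y, CauchySeq fun n => fs n y) {a b : Y} {t : ℝ} {K m μ : ℕ}
    (haK : a ∈ stableSet fs K m) (hμ : μ ≤ m) (hba : dist b a ≤ √t) :
    dist (certValue fs b t μ) (fs K (certPoint fs b t μ)) ≤ (2⁻¹ : ℝ) ^ μ ∧
      dist (certPoint fs b t μ) a ≤ 2 * √t := by
  obtain ⟨hmem, hdist⟩ := certPoint_spec hfs b t μ
  have hK : certIndex fs b t μ ≤ K :=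
    certIndex_le (stableSet_mono le_rfl hμ haK) (by rwa [dist_comm])
  exact ⟨hmem _ le_rfl _ hK, by linarith [dist_triangle (certPoint fs b t μ) b a]⟩

lemma dist_selectedValue_le_of_mem_stableSet (hfs : ∀ y, Tendsto (fun n => fs n y) atTop (𝓝 (f y)))
    {a b : Y} {t : ℝ} {K m : ℕ} (haK : a ∈ stableSet fs K m)
    (hK : ∀ y, dist y a ≤ 2 * √t → dist (fs K y) (fs K a) ≤ (2⁻¹ : ℝ) ^ m / 2)
    (hm : m ≤ ⌈t⁻¹⌉₊) (hba : dist b a ≤ √t) :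
    dist (selectedValue fs b t) (f a) ≤ 6 * (2⁻¹ : ℝ) ^ m ∧ m ≤ coherentLevel fs b t := by
  have hval : ∀ μ ≤ m, dist (certValue fs b t μ) (fs K a) ≤ (2⁻¹ : ℝ) ^ μ + (2⁻¹ : ℝ) ^ m / 2 :=
    fun μ hμ => by
      obtain ⟨h₁, h₂⟩ := dist_certValue_le (fun y => (hfs y).cauchySeq) haK hμ hba
      exact (dist_triangle _ _ _).trans (add_le_add h₁ (hK _ h₂))
  have hcoh : IsCoherent fs b t m := fun μ' hμ' μ hμ => by
    have h₁ := hval μ (hμ.trans hμ')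
    have h₂ := hval μ' hμ'
    have h₃ : (2⁻¹ : ℝ) ^ μ' ≤ 2⁻¹ ^ μ := pow_le_pow_of_le_one (by norm_num) (by norm_num) hμ
    have h₄ : (2⁻¹ : ℝ) ^ m ≤ 2⁻¹ ^ μ :=
      pow_le_pow_of_le_one (by norm_num) (by norm_num) (hμ.trans hμ')
    linarith [dist_triangle_right (certValue fs b t μ) (certValue fs b t μ') (fs K a)]
  obtain ⟨hle, hsel⟩ := le_coherentLevel hcoh hm
  refine ⟨?_, hle⟩
  have h₁ := hval m le_rfl
  have h₂ := dist_le_of_mem_stableSet hfs haK le_rfl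
  rw [dist_comm] at hsel
  linarith [pow_pos (by norm_num : (0 : ℝ) < 2⁻¹) m,
    dist_triangle4 (selectedValue fs b t) (certValue fs b t m) (fs K a) (f a)]

lemma eventually_dist_selectedValue_le (hcont : ∀ n, Continuous (fs n))
    (hfs : ∀ y, Tendsto (fun n => fs n y) atTop (𝓝 (f y))) (a : Y) {ε : ℝ} (hε : 0 < ε) :
    ∀ᶠ t in 𝓝[>] 0, ∀ b, dist b a ≤ √t →
      dist (selectedValue fs b t) (f a) ≤ ε ∧
        dist (selectedValue fs b t) (f (anchor fs b t)) ≤ ε := by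
  have htol : Tendsto (fun m : ℕ => 6 * (2⁻¹ : ℝ) ^ m) atTop (𝓝 0) := by
    simpa using (tendsto_pow_atTop_nhds_zero_of_lt_one (by norm_num : (0 : ℝ) ≤ 2⁻¹)
      (by norm_num)).const_mul 6
  obtain ⟨m, hm⟩ := (htol.eventually_lt_const hε).exists
  obtain ⟨K, haK⟩ := exists_mem_stableSet (fun y => (hfs y).cauchySeq) a m
  obtain ⟨δ, hδ, hK⟩ :=
    Metric.continuous_iff.1 (hcont K) a _ (by positivity : (0 : ℝ) < 2⁻¹ ^ m / 2)
  have hsqrt : ∀ᶠ t in 𝓝[>] (0 : ℝ), 2 * √t < δ := by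
    refine eventually_nhdsWithin_of_eventually_nhds (Tendsto.eventually_lt_const hδ ?_)
    simpa using (Real.continuous_sqrt.tendsto 0).const_mul 2
  have hcap : ∀ᶠ t in 𝓝[>] (0 : ℝ), m ≤ ⌈t⁻¹⌉₊ :=
    (tendsto_nat_ceil_atTop.comp tendsto_inv_nhdsGT_zero).eventually_ge_atTop m
  filter_upwards [hsqrt, hcap] with t ht hmt b hb
  obtain ⟨hsel, hle⟩ := dist_selectedValue_le_of_mem_stableSet hfs haK
    (fun y hy => (hK y (hy.trans_lt ht)).le) hmt hb
  have hpow : (2⁻¹ : ℝ) ^ coherentLevel fs b t ≤ 2⁻¹ ^ m :=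
    pow_le_pow_of_le_one (by norm_num) (by norm_num) hle
  have := pow_pos (by norm_num : (0 : ℝ) < 2⁻¹) m
  exact ⟨by linarith, (dist_selectedValue_anchor_le hfs b t).trans (by linarith)⟩

end Selection

section LocalValue

variable {Y Z : Type*} [NormedAddCommGroup Z] [NormedSpace ℝ Z]

def clampNorm (R : ℝ) (v : Z) : Z :=
  if ‖v‖ ≤ R then v else (R / ‖v‖) • v

lemma clampNorm_of_norm_le {R : ℝ} {v : Z} (h : ‖v‖ ≤ R) : clampNorm R v = v :=
  if_pos h

lemma norm_clampNorm {R : ℝ} (hR : 0 ≤ R) (v : Z) : ‖clampNorm R v‖ = min ‖v‖ R := by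
  unfold clampNorm
  split_ifs with h
  · exact (min_eq_left h).symm
  · push Not at h
    rw [norm_smul, Real.norm_of_nonneg (by positivity), div_mul_cancel₀ _ (hR.trans_lt h).ne',
      min_eq_right h.le]

lemma norm_clampNorm_sub {R : ℝ} (hR : 0 ≤ R) (v : Z) :
    ‖clampNorm R v - v‖ = ‖v‖ - min ‖v‖ R := by
  unfold clampNorm
  split_ifs with h
  · rw [sub_self, norm_zero, min_eq_left h, sub_self]
  · push Not at h
    have hv : 0 < ‖v‖ := hR.trans_lt h
    rw [show (R / ‖v‖) • v - v = (R / ‖v‖ - 1) • v by rw [sub_smul, one_smul], norm_smul,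
      Real.norm_of_nonpos, min_eq_right h.le]
    · field_simp
      ring
    · rw [sub_nonpos, div_le_one hv]
      exact h.le

variable [PseudoMetricSpace Y] {f : Y → Z} {fs : ℕ → Y → Z}

variable (f fs) in
def recenteredValue (b : Y) (t : ℝ) : Z :=
  f b + clampNorm (dist (f (anchor fs b t)) (f b)) (selectedValue fs b t - f b)

variable (f fs) in
def localValue (b : Y) (t : ℝ) : Z :=
  clampNorm (√√t)⁻¹ (recenteredValue f fs b t)

lemma dist_recenteredValue_self (b : Y) (t : ℝ) :
    dist (recenteredValue f fs b t) (f b) ≤ dist (f (anchor fs b t)) (f b) := by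
  rw [recenteredValue, dist_eq_norm, add_sub_cancel_left, norm_clampNorm dist_nonneg]
  exact min_le_right _ _

lemma dist_recenteredValue_selectedValue_le {b : Y} {t c : ℝ} (hc : 0 ≤ c)
    (h : dist (selectedValue fs b t) (f (anchor fs b t)) ≤ c) :
    dist (recenteredValue f fs b t) (selectedValue fs b t) ≤ c := by
  set R := dist (f (anchor fs b t)) (f b)
  set v := selectedValue fs b t - f b
  have hv : ‖v‖ ≤ c + R := by
    rw [← dist_eq_norm]
    linarith [dist_triangle (selectedValue fs b t) (f (anchor fs b t)) (f b)]
  have hrec : recenteredValue f fs b t - selectedValue fs b t = clampNorm R v - v := by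
    simp only [recenteredValue, R, v]
    abel
  rw [dist_eq_norm, hrec, norm_clampNorm_sub dist_nonneg]
  rcases min_cases ‖v‖ R with ⟨hmin, -⟩ | ⟨hmin, -⟩ <;> linarith

lemma norm_localValue_le (b : Y) (t : ℝ) : ‖localValue f fs b t‖ ≤ (√√t)⁻¹ := by
  rw [localValue, norm_clampNorm (by positivity)]
  exact min_le_right _ _

lemma localValue_of_norm_le {b : Y} {t : ℝ} (h : ‖recenteredValue f fs b t‖ ≤ (√√t)⁻¹) :
    localValue f fs b t = recenteredValue f fs b t :=
  clampNorm_of_norm_le h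

lemma norm_localValue_le_of_forall (hfs : ∀ y, CauchySeq fun n => fs n y) {b : Y} {t M : ℝ}
    (hM : ∀ y, dist y b ≤ √t → ‖f y‖ ≤ M) : ‖localValue f fs b t‖ ≤ 3 * M := by
  have hb := hM b (by rw [dist_self]; positivity)
  have hanchor := hM _ (dist_anchor_le hfs b t)
  calc ‖localValue f fs b t‖ ≤ ‖recenteredValue f fs b t‖ := by
        rw [localValue, norm_clampNorm (by positivity)]
        exact min_le_left _ _
    _ ≤ ‖f b‖ + dist (recenteredValue f fs b t) (f b) := by
        rw [dist_eq_norm]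
        exact norm_le_norm_add_norm_sub' _ _
    _ ≤ ‖f b‖ + (‖f (anchor fs b t)‖ + ‖f b‖) :=
        add_le_add le_rfl ((dist_recenteredValue_self b t).trans (dist_le_norm_add_norm _ _))
    _ ≤ 3 * M := by linarith

lemma tendsto_inv_sqrt_sqrt : Tendsto (fun t : ℝ => (√√t)⁻¹) (𝓝[>] 0) atTop := by
  refine tendsto_inv_nhdsGT_zero.comp (tendsto_nhdsWithin_iff.2 ⟨?_, ?_⟩)
  · simpa [Function.comp_def] using
      ((Real.continuous_sqrt.comp Real.continuous_sqrt).tendsto 0).mono_left nhdsWithin_le_nhds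
  · exact eventually_nhdsWithin_of_forall fun t ht => Real.sqrt_pos.2 (Real.sqrt_pos.2 ht)

lemma eventually_dist_localValue_le (hcont : ∀ n, Continuous (fs n))
    (hfs : ∀ y, Tendsto (fun n => fs n y) atTop (𝓝 (f y))) (a : Y) {ε : ℝ} (hε : 0 < ε) :
    ∀ᶠ t in 𝓝[>] 0, ∀ b, dist b a ≤ √t → dist (localValue f fs b t) (f a) ≤ ε := by
  filter_upwards [eventually_dist_selectedValue_le hcont hfs a (half_pos hε),
    tendsto_inv_sqrt_sqrt.eventually_ge_atTop (‖f a‖ + ε)] with t hsel hcap b hb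
  obtain ⟨h₁, h₂⟩ := hsel b hb
  have hrec : dist (recenteredValue f fs b t) (f a) ≤ ε := by
    linarith [dist_recenteredValue_selectedValue_le (half_pos hε).le h₂,
      dist_triangle (recenteredValue f fs b t) (selectedValue fs b t) (f a)]
  rwa [localValue_of_norm_le]
  rw [dist_eq_norm] at hrec
  linarith [norm_le_norm_add_norm_sub' (recenteredValue f fs b t) (f a)]

lemma eventually_norm_localValue_sub_mul_le (hcont : ∀ n, Continuous (fs n))
    (hfs : ∀ y, Tendsto (fun n => fs n y) atTop (𝓝 (f y))) (a : Y) {ε : ℝ} (hε : 0 < ε) :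
    ∀ᶠ t in 𝓝[>] 0, ∀ b w, 0 ≤ w → w ≤ 1 → w * dist b a ≤ 5 * t →
      ‖localValue f fs b t - f a‖ * w ≤ ε := by
  have hfar : Tendsto (fun t : ℝ => 5 * (√√t + ‖f a‖ * √t)) (𝓝[>] 0) (𝓝 0) := by
    have : Continuous fun t : ℝ => 5 * (√√t + ‖f a‖ * √t) := by fun_prop
    simpa using (this.tendsto 0).mono_left nhdsWithin_le_nhds
  filter_upwards [eventually_dist_localValue_le hcont hfs a hε, hfar.eventually_le_const hε,
    self_mem_nhdsWithin] with t hnear hfar (ht : 0 < t) b w hw₀ hw₁ hwb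
  by_cases hb : dist b a ≤ √t
  · rw [← dist_eq_norm]
    nlinarith [hnear b hb, dist_nonneg (x := localValue f fs b t) (y := f a)]
  -- far from `a` the weight is `O(√t)`, which beats the cap `(√√t)⁻¹`
  push Not at hb
  have hsqrt : √t * √t = t := Real.mul_self_sqrt ht.le
  have hw : w ≤ 5 * √t := by
    have hs : 0 < √t := Real.sqrt_pos.2 ht
    nlinarith [mul_le_mul_of_nonneg_left hb.le hw₀]
  have hcap : (√√t)⁻¹ * √t = √√t := by
    rw [inv_mul_eq_div, div_eq_iff (Real.sqrt_pos.2 (Real.sqrt_pos.2 ht)).ne',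
      Real.mul_self_sqrt (Real.sqrt_nonneg t)]
  calc ‖localValue f fs b t - f a‖ * w ≤ ((√√t)⁻¹ + ‖f a‖) * (5 * √t) :=
        mul_le_mul ((norm_sub_le _ _).trans (add_le_add (norm_localValue_le b t) le_rfl)) hw hw₀
          (by positivity)
    _ = 5 * (√√t + ‖f a‖ * √t) := by linear_combination 5 * hcap
    _ ≤ ε := hfar

lemma tendsto_localValue (hfs : ∀ y, Tendsto (fun n => fs n y) atTop (𝓝 (f y))) {a : Y}
    (ha : ContinuousAt f a) :
    Tendsto (fun q : ℝ × Y => localValue f fs q.2 q.1) (𝓝[>] 0 ×ˢ 𝓝 a) (𝓝 (f a)) := by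
  have hb := tendsto_iff_dist_tendsto_zero.1 (ha.tendsto.comp (tendsto_snd (f := 𝓝[>] (0 : ℝ))))
  have hanchor := tendsto_iff_dist_tendsto_zero.1
    (ha.tendsto.comp (tendsto_anchor (fun y => (hfs y).cauchySeq) a))
  have hle : ∀ q : ℝ × Y, dist (recenteredValue f fs q.2 q.1) (f a) ≤
      dist (f (anchor fs q.2 q.1)) (f a) + 2 * dist (f q.2) (f a) := fun q => by
    linarith [dist_recenteredValue_self (f := f) (fs := fs) q.2 q.1,
      dist_triangle (recenteredValue f fs q.2 q.1) (f q.2) (f a),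
      dist_triangle_right (f (anchor fs q.2 q.1)) (f q.2) (f a)]
  have hrec : Tendsto (fun q : ℝ × Y => recenteredValue f fs q.2 q.1) (𝓝[>] 0 ×ˢ 𝓝 a)
      (𝓝 (f a)) :=
    tendsto_iff_dist_tendsto_zero.2 (squeeze_zero (fun _ => dist_nonneg) hle
      (by simpa using hanchor.add (hb.const_mul 2)))
  refine hrec.congr' ?_
  filter_upwards [(tendsto_inv_sqrt_sqrt.comp tendsto_fst).eventually_ge_atTop (‖f a‖ + 1),
    hrec.eventually (closedBall_mem_nhds _ one_pos)] with q hcap hq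
  rw [dist_eq_norm] at hq
  rw [Function.comp_apply] at hcap
  refine (localValue_of_norm_le ?_).symm
  linarith [norm_le_norm_add_norm_sub' (recenteredValue f fs q.2 q.1) (f a), hcap]

end LocalValue

section Whitney

variable {X Z : Type*} [MetricSpace X] [NormedAddCommGroup Z] [NormedSpace ℝ Z] {H : Set X}

def IsWhitneyPair (H : Set X) (x b : X) (s : ℝ) : Prop :=
  s ≤ 2 * infDist x H ∧ infDist x H ≤ 2 * s ∧ dist x b ≤ 3 * s

def whitneyValues (H : Set X) (v : H → ℝ → Z) (x : X) : Set Z :=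
  {z | ∃ (b : H) (s : ℝ), IsWhitneyPair H x b s ∧ v b s = z}

namespace IsWhitneyPair

variable {x a b : X} {s : ℝ}

lemma pos (h : IsWhitneyPair H x b s) (hH : IsClosed H) (hne : H.Nonempty) (hx : x ∉ H) :
    0 < s := by
  linarith [h.2.1, (hH.notMem_iff_infDist_pos hne).1 hx]

lemma le_two_mul_dist (h : IsWhitneyPair H x b s) (ha : a ∈ H) : s ≤ 2 * dist x a := by
  linarith [h.1, infDist_le_dist_of_mem (x := x) ha]

lemma dist_le (h : IsWhitneyPair H x b s) (ha : a ∈ H) : dist b a ≤ 7 * dist x a := by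
  linarith [h.2.2, h.le_two_mul_dist ha, dist_triangle_left b a x]

lemma div_mul_dist_le (h : IsWhitneyPair H x b s) (ha : a ∈ H) :
    infDist x H / dist x a * dist b a ≤ 5 * s := by
  have hs : 0 ≤ s := by linarith [h.2.1, infDist_nonneg (x := x) (s := H)]
  rcases (dist_nonneg (x := x) (y := a)).eq_or_lt with hD | hD
  · rw [← hD, _root_.div_zero, zero_mul]
    positivity
  have hw : infDist x H / dist x a ≤ 1 := div_le_one_of_le₀ (infDist_le_dist_of_mem ha) hD.le
  calc infDist x H / dist x a * dist b a
      ≤ infDist x H / dist x a * (3 * s + dist x a) := by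
        refine mul_le_mul_of_nonneg_left ?_ (div_nonneg infDist_nonneg dist_nonneg)
        linarith [h.2.2, dist_triangle_left b a x]
    _ = 3 * s * (infDist x H / dist x a) + infDist x H := by field_simp
    _ ≤ 5 * s := by nlinarith [h.2.1]

end IsWhitneyPair

lemma exists_continuousOn_mem_convexHull_whitneyValues (hH : IsClosed H) (hne : H.Nonempty)
    (v : H → ℝ → Z) :
    ∃ g : X → Z, ContinuousOn g Hᶜ ∧ ∀ x ∉ H, g x ∈ convexHull ℝ (whitneyValues H v x) := by
  classical
  obtain ⟨G, hG⟩ : ∃ G : C(↥Hᶜ, Z), ∀ x : ↥Hᶜ, G x ∈ convexHull ℝ (whitneyValues H v x) := by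
    refine exists_continuous_forall_mem_convex_of_local_const (fun _ => convex_convexHull ℝ _)
      fun x => ?_
    have hs : 0 < infDist (x : X) H := (hH.notMem_iff_infDist_pos hne).1 x.2
    obtain ⟨b, hb, hxb⟩ :=
      (infDist_lt_iff hne).1 (by linarith : infDist (x : X) H < 2 * infDist (x : X) H)
    refine ⟨v ⟨b, hb⟩ (infDist (x : X) H), ?_⟩
    filter_upwards [ball_mem_nhds x (half_pos hs)] with y (hy : dist (y : X) x < _)
    refine subset_convexHull ℝ _ ⟨⟨b, hb⟩, _, ⟨?_, ?_, ?_⟩, rfl⟩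
    · linarith [infDist_le_infDist_add_dist (x := (x : X)) (y := (y : X)) (s := H),
        dist_comm (x : X) y]
    · linarith [infDist_le_infDist_add_dist (x := (y : X)) (y := (x : X)) (s := H)]
    · linarith [dist_triangle (y : X) x b]
  refine ⟨fun x => if hx : x ∈ Hᶜ then G ⟨x, hx⟩ else 0, ?_,
    fun x hx => by simpa [hx] using hG ⟨x, hx⟩⟩
  rw [continuousOn_iff_continuous_domRestrict]
  convert G.continuous using 1
  ext x
  exact dif_pos x.2

variable {g : X → Z} {v : H → ℝ → Z} {a : X}

lemma eventually_forall_isWhitneyPair (hH : IsClosed H) (ha : a ∈ H) {P : ℝ × H → Prop}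
    (hP : ∀ᶠ q in 𝓝[>] 0 ×ˢ 𝓝 (⟨a, ha⟩ : H), P q) :
    ∀ᶠ x in 𝓝[Hᶜ] a, x ∉ H ∧ ∀ (b : H) s, IsWhitneyPair H x b s → P (s, b) := by
  obtain ⟨p, hp, p', hp', hP⟩ := eventually_prod_iff.1 hP
  obtain ⟨δ, hδ : 0 < δ, hδp⟩ := mem_nhdsGT_iff_exists_Ioo_subset.1 hp
  obtain ⟨δ', hδ', hδp'⟩ := Metric.eventually_nhds_iff.1 hp'
  have hball : ball a (min (δ / 2) (δ' / 7)) ∈ 𝓝 a := ball_mem_nhds a (by positivity)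
  filter_upwards [self_mem_nhdsWithin, mem_nhdsWithin_of_mem_nhds hball] with x hx hxa
  rw [mem_ball, lt_min_iff] at hxa
  refine ⟨hx, fun b s hbs => hP (hδp ⟨hbs.pos hH ⟨a, ha⟩ hx, ?_⟩) (hδp' ?_)⟩
  · linarith [hbs.le_two_mul_dist ha]
  · change dist (b : X) a < δ'
    linarith [hbs.dist_le ha]

lemma tendsto_norm_sub_mul_of_whitneyValues (hH : IsClosed H)
    (hg : ∀ x ∉ H, g x ∈ convexHull ℝ (whitneyValues H v x)) (ha : a ∈ H) {c : Z}
    (hv : ∀ ε > 0, ∀ᶠ s in 𝓝[>] 0, ∀ (b : H) w, 0 ≤ w → w ≤ 1 → w * dist (b : X) a ≤ 5 * s →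
      ‖v b s - c‖ * w ≤ ε) :
    Tendsto (fun x => ‖g x - c‖ * (infDist x H / dist x a)) (𝓝[Hᶜ] a) (𝓝 0) := by
  refine nhds_basis_closedBall.tendsto_right_iff.2 fun ε hε => ?_
  filter_upwards [eventually_forall_isWhitneyPair hH ha ((hv ε hε).prod_inl (𝓝 (⟨a, ha⟩ : H)))]
    with x ⟨hx, hxv⟩
  have hw : 0 < infDist x H / dist x a :=
    div_pos ((hH.notMem_iff_infDist_pos ⟨a, ha⟩).1 hx) (dist_pos.2 fun h => hx (h ▸ ha))
  have hgx : g x ∈ closedBall c (ε / (infDist x H / dist x a)) := by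
    refine (convex_closedBall c _).convexHull_subset_iff.2 ?_ (hg x hx)
    rintro _ ⟨b, s, hbs, rfl⟩
    rw [mem_closedBall, dist_eq_norm, le_div_iff₀ hw]
    exact hxv b s hbs b _ hw.le (div_le_one_of_le₀ (infDist_le_dist_of_mem ha) dist_nonneg)
      (hbs.div_mul_dist_le ha)
  rw [mem_closedBall, dist_eq_norm, le_div_iff₀ hw] at hgx
  rwa [mem_closedBall, dist_zero_right, Real.norm_of_nonneg (by positivity)]

lemma tendsto_of_whitneyValues (hH : IsClosed H)
    (hg : ∀ x ∉ H, g x ∈ convexHull ℝ (whitneyValues H v x)) (ha : a ∈ H) {c : Z}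
    (hv : Tendsto (fun q : ℝ × H => v q.2 q.1) (𝓝[>] 0 ×ˢ 𝓝 ⟨a, ha⟩) (𝓝 c)) :
    Tendsto g (𝓝[Hᶜ] a) (𝓝 c) := by
  refine nhds_basis_closedBall.tendsto_right_iff.2 fun ε hε => ?_
  filter_upwards [eventually_forall_isWhitneyPair hH ha (hv.eventually (closedBall_mem_nhds c hε))]
    with x ⟨hx, hxv⟩
  refine (convex_closedBall c ε).convexHull_subset_iff.2 ?_ (hg x hx)
  rintro _ ⟨b, s, hbs, rfl⟩
  exact hxv b s hbs

lemma exists_norm_le_of_whitneyValues {f : H → Z} {fs : ℕ → H → Z}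
    (hfs : ∀ y, CauchySeq fun n => fs n y)
    (hg : ∀ x ∉ H, g x ∈ convexHull ℝ (whitneyValues H (localValue f fs) x)) (ha : a ∈ H)
    {r : ℝ≥0∞} {M : ℝ} (hM : ∀ y : H, (y : X) ∈ eball a (12 * r) → ‖f y‖ ≤ M) :
    ∃ C : ℝ, ∀ x ∈ eball a r \ H, ‖g x‖ ≤ C := by
  refine ⟨max (3 * M) (√(5 * r.toReal))⁻¹, fun x ⟨hxa, hx⟩ => ?_⟩
  rw [mem_eball] at hxa
  rw [← dist_zero_right, ← mem_closedBall]
  refine (convex_closedBall (0 : Z) _).convexHull_subset_iff.2 ?_ (hg x hx)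
  rintro _ ⟨b, s, hbs, rfl⟩
  rw [mem_closedBall, dist_zero_right]
  by_cases hs : ENNReal.ofReal √s ≤ 5 * r
  · -- small scales: the search ball around `b` stays inside the ball of radius `12 r`
    refine (norm_localValue_le_of_forall hfs fun y hy => hM y ?_).trans (le_max_left _ _)
    have hba : edist (b : X) a < 7 * r := by
      calc edist (b : X) a ≤ ENNReal.ofReal (7 * dist x a) := by
            rw [edist_dist]
            exact ENNReal.ofReal_le_ofReal (hbs.dist_le ha)
        _ = 7 * edist x a := by rw [ENNReal.ofReal_mul (by norm_num), edist_dist]; simp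
        _ < 7 * r := by
            rw [mul_comm, mul_comm 7 r]
            exact ENNReal.mul_lt_mul_left (by norm_num) (by norm_num) hxa
    have hyb : edist (y : X) b ≤ 5 * r := by
      rw [edist_dist]
      exact (ENNReal.ofReal_le_ofReal hy).trans hs
    rw [mem_eball]
    calc edist (y : X) a ≤ edist (y : X) b + edist (b : X) a := edist_triangle _ _ _
      _ < 5 * r + 7 * r := ENNReal.add_lt_add_of_le_of_lt (edist_ne_top _ _) hyb hba
      _ = 12 * r := by ring
  · -- large scales: the cap `(√√s)⁻¹` alone gives the bound
    push Not at hs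
    have hr : r ≠ ⊤ := by
      rintro rfl
      simp at hs
    have hr₀ : 0 < r.toReal := ENNReal.toReal_pos (pos_of_gt hxa).ne' hr
    have h5 : 5 * r.toReal < √s := by
      rwa [← ENNReal.ofReal_toReal hr, ← ENNReal.ofReal_ofNat, ← ENNReal.ofReal_mul (by norm_num),
        ENNReal.ofReal_lt_ofReal_iff_of_nonneg (by positivity)] at hs
    exact (norm_localValue_le b s).trans
      ((inv_anti₀ (by positivity) (Real.sqrt_le_sqrt h5.le)).trans (le_max_right _ _))

end Whitney

end

end BaireOneExtension

open BaireOneExtension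

/-- Extension theorem for vector-valued Baire one functions, with
non-tangential limits (NT), preservation of continuity points (C),
and preservation of local boundedness (B). -/
theorem baire_one_extension {X Z : Type*} [MetricSpace X]
    [NormedAddCommGroup Z] [NormedSpace ℝ Z]
    (H : Set X) (hH : IsClosed H) (f : H → Z) (hf : IsBaireOne f) :
    ∃ g : X → Z, ContinuousOn g Hᶜ ∧
      -- (NT)
      (∀ a, ∀ ha : a ∈ frontier H,
        Tendsto (fun x => ‖g x - f ⟨a, hH.frontier_subset ha⟩‖ * (infDist x H / dist x a))
          (nhdsWithin a Hᶜ) (nhds 0)) ∧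
      -- (C)
      (∀ a, ∀ ha : a ∈ frontier H, ContinuousAt f ⟨a, hH.frontier_subset ha⟩ →
        Tendsto g (nhdsWithin a Hᶜ) (nhds (f ⟨a, hH.frontier_subset ha⟩))) ∧
      -- (B)
      (∀ a ∈ H, ∀ r : ℝ≥0∞, 0 < r →
        (∃ M : ℝ, ∀ y : H, (y : X) ∈ EMetric.ball a (12 * r) → ‖f y‖ ≤ M) →
        ∃ M : ℝ, ∀ x ∈ EMetric.ball a r \ H, ‖g x‖ ≤ M) := by
  obtain ⟨fs, hcont, hfs⟩ := hf
  rcases H.eq_empty_or_nonempty with rfl | hne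
  · exact ⟨0, continuousOn_const, by simp, by simp, by simp⟩
  obtain ⟨g, hgc, hg⟩ := exists_continuousOn_mem_convexHull_whitneyValues hH hne (localValue f fs)
  refine ⟨g, hgc, fun a ha => ?_, fun a ha hfa => ?_, fun a ha r _ ⟨M, hM⟩ => ?_⟩
  · exact tendsto_norm_sub_mul_of_whitneyValues hH hg (hH.frontier_subset ha)
      fun ε hε => eventually_norm_localValue_sub_mul_le hcont hfs ⟨a, hH.frontier_subset ha⟩ hε
  · exact tendsto_of_whitneyValues hH hg (hH.frontier_subset ha) (tendsto_localValue hfs hfa)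
  · exact exists_norm_le_of_whitneyValues (fun y => (hfs y).cauchySeq) hg ha hM
end

section
/- Let (X,d) be a metric space, H ⊂ X a closed set, Z a normed linear space and f : H → Z a Baire one function. Then there exists a continuous function g : (X \ H) → Z such that for every a ∈ ∂H the non-tangential limit condition holds: lim_{x→a, x∈X\H} ‖g(x) − f(a)‖ · dist(x,H)/d(x,a) = 0. -/
open Filter Topology Metric

/-!
Write `f` as the pointwise limit of continuous maps `u n`. For `p ∈ H` and a scale `ρ > 0`
let `n = n(p, ρ)` be the largest `n ≤ 1/ρ` such that `u n` oscillates by at most `1/n` on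
the ball of radius `nρ` about `p`, and attach to `(p, ρ)` the value `u n p`, replaced by `0`
when its norm exceeds `√n`. Continuity of each `u n` at `a` forces `n(p, ρ) → ∞` as
`(p, ρ) → (a, 0)`.

The extension `g` is a partition-of-unity average of these values over Whitney-type balls of
`Hᶜ`, at scales `ρ` comparable to `dist(x, H)` and with `p ∈ H` at distance `O(ρ)` from the
centre of the ball. For each value entering `g x`, either `a` lies in the ball of radius `nρ`
about `p`, and then the value is within `1/n + ‖u n a - f a‖` of `f a`; or it does not, and
then `dist(x, H) / d(x, a) ≤ 4/n` while the value has norm at most `√n`. Both bounds vanish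
as `n → ∞`.
-/

section OscillationIndex

open Classical

variable {α E : Type*} [PseudoMetricSpace α] [SeminormedAddCommGroup E]

def OscBound (u : ℕ → α → E) (p : α) (ρ : ℝ) (n : ℕ) : Prop :=
  ∀ q, dist q p ≤ n * ρ → ‖u n q - u n p‖ ≤ (n : ℝ)⁻¹

noncomputable def oscIndex (u : ℕ → α → E) (p : α) (ρ : ℝ) : ℕ :=
  Nat.findGreatest (OscBound u p ρ) ⌊ρ⁻¹⌋₊

noncomputable def oscValue (u : ℕ → α → E) (p : α) (ρ : ℝ) : E :=
  if ‖u (oscIndex u p ρ) p‖ ≤ √(oscIndex u p ρ) then u (oscIndex u p ρ) p else 0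

variable {u : ℕ → α → E} {p : α} {ρ : ℝ}

lemma norm_oscValue_le : ‖oscValue u p ρ‖ ≤ √(oscIndex u p ρ) := by
  unfold oscValue
  split_ifs with h
  · exact h
  · simp

lemma exists_forall_le_oscIndex {a : α} {M : ℕ} (hu : ContinuousAt (u M) a) :
    ∃ δ > 0, ∀ p ρ, dist p a < δ → 0 < ρ → ρ < δ → M ≤ oscIndex u p ρ := by
  rcases M.eq_zero_or_pos with rfl | hM
  · exact ⟨1, one_pos, fun _ _ _ _ _ => Nat.zero_le _⟩
  obtain ⟨r, hr, hur⟩ := Metric.continuousAt_iff.1 hu (2 * M)⁻¹ (by positivity)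
  set δ := min r 1 / (M + 1)
  have hδr : (M + 1) * δ ≤ r := by
    rw [mul_div_cancel₀ _ (by positivity)]; exact min_le_left _ _
  have hδ1 : (M + 1) * δ ≤ 1 := by
    rw [mul_div_cancel₀ _ (by positivity)]; exact min_le_right _ _
  refine ⟨δ, by positivity, fun p ρ hpa hρ hρδ => Nat.le_findGreatest ?_ fun q hqp => ?_⟩
  · refine Nat.le_floor ?_
    rw [← one_div, le_div_iff₀ hρ]
    nlinarith
  · have hqa : dist q a < r := by
      calc dist q a ≤ dist q p + dist p a := dist_triangle _ _ _
        _ < M * δ + δ := add_lt_add_of_le_of_lt (hqp.trans (by gcongr)) hpa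
        _ ≤ r := by linarith
    calc ‖u M q - u M p‖ = dist (u M q) (u M p) := (dist_eq_norm _ _).symm
      _ ≤ dist (u M q) (u M a) + dist (u M p) (u M a) := dist_triangle_right _ _ _
      _ ≤ (2 * (M : ℝ))⁻¹ + (2 * (M : ℝ))⁻¹ :=
          add_le_add (hur hqa).le (hur (hpa.trans_le (by nlinarith))).le
      _ = (M : ℝ)⁻¹ := by field_simp; ring

lemma norm_oscValue_sub_le {a : α} {n : ℕ} {v : E} (hn : oscIndex u p ρ = n) (hn0 : n ≠ 0)
    (hap : dist a p ≤ n * ρ) (hna : ‖u n a‖ + 1 ≤ √n) :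
    ‖oscValue u p ρ - v‖ ≤ (n : ℝ)⁻¹ + ‖u n a - v‖ := by
  have hosc : ‖u n a - u n p‖ ≤ (n : ℝ)⁻¹ := Nat.findGreatest_of_ne_zero hn hn0 a hap
  have hinv : (n : ℝ)⁻¹ ≤ 1 :=
    inv_le_one_of_one_le₀ (by exact_mod_cast Nat.one_le_iff_ne_zero.2 hn0)
  have hval : oscValue u p ρ = u n p := by
    rw [oscValue, hn, if_pos]
    calc ‖u n p‖ ≤ ‖u n a‖ + ‖u n a - u n p‖ := norm_le_insert _ _
      _ ≤ √n := by linarith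
  calc ‖oscValue u p ρ - v‖ ≤ ‖u n p - u n a‖ + ‖u n a - v‖ := by
        rw [hval]; exact norm_sub_le_norm_sub_add_norm_sub _ _ _
    _ ≤ (n : ℝ)⁻¹ + ‖u n a - v‖ := by rw [norm_sub_rev]; gcongr

end OscillationIndex

section WhitneyPair

variable {X : Type*} [PseudoMetricSpace X] {H : Set X}

def IsWhitneyPair (H : Set X) (x p : X) (ρ : ℝ) : Prop :=
  0 < ρ ∧ infDist x H ≤ 2 * ρ ∧ ρ ≤ 2 * infDist x H ∧ dist x p ≤ 3 * ρ

lemma isWhitneyPair_of_dist_lt {c p y : X} (hc : 0 < infDist c H)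
    (hcp : dist c p < 2 * infDist c H) (hyc : dist y c < infDist c H / 2) :
    IsWhitneyPair H y p (infDist c H) := by
  have hy : infDist y H ≤ infDist c H + dist y c := infDist_le_infDist_add_dist
  have hc' : infDist c H ≤ infDist y H + dist c y := infDist_le_infDist_add_dist
  have hyp : dist y p ≤ dist y c + dist c p := dist_triangle _ _ _
  rw [dist_comm] at hc'
  exact ⟨hc, by linarith, by linarith, by linarith⟩

lemma infDist_div_dist_le_of_isWhitneyPair {x p a : X} {ρ : ℝ} {n : ℕ}
    (hxp : IsWhitneyPair H x p ρ) (hn : 6 ≤ n) (hpa : n * ρ < dist p a) :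
    infDist x H / dist x a ≤ 4 / n := by
  obtain ⟨hρ, hxρ, -, hxp⟩ := hxp
  have hn' : (6 : ℝ) ≤ n := by exact_mod_cast hn
  have hxa : n * ρ / 2 < dist x a := by
    have hpxa := dist_triangle p x a
    rw [dist_comm p x] at hpxa
    nlinarith
  rw [div_le_div_iff₀ (by nlinarith) (by positivity)]
  nlinarith

theorem exists_continuousOn_forall_mem_convexHull {E : Type*} [AddCommGroup E] [Module ℝ E]
    [TopologicalSpace E] [ContinuousAdd E] [ContinuousSMul ℝ E]
    (hH : IsClosed H) (hne : H.Nonempty) (F : H → ℝ → E) :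
    ∃ g : X → E, ContinuousOn g Hᶜ ∧ ∀ x ∉ H,
      g x ∈ convexHull ℝ
        {w | ∃ (p : H) (ρ : ℝ), IsWhitneyPair H x p ρ ∧ F p ρ = w} := by
  classical
  have hpos (c : ↥Hᶜ) : 0 < infDist (c : X) H := (hH.notMem_iff_infDist_pos hne).1 c.2
  have hnear (c : ↥Hᶜ) : ∃ p : H, dist (c : X) p < 2 * infDist (c : X) H := by
    obtain ⟨p, hp, hcp⟩ := (infDist_lt_iff hne).1
      (by linarith [hpos c] : infDist (c : X) H < 2 * infDist (c : X) H)
    exact ⟨⟨p, hp⟩, hcp⟩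
  choose P hP using hnear
  obtain ⟨g, hg⟩ := exists_continuous_forall_mem_convex_of_local_const
    (t := fun y : ↥Hᶜ =>
      convexHull ℝ {w | ∃ (p : H) (ρ : ℝ), IsWhitneyPair H y p ρ ∧ F p ρ = w})
    (fun _ => convex_convexHull ℝ _) fun c => ⟨F (P c) (infDist (c : X) H), by
      filter_upwards [ball_mem_nhds c (half_pos (hpos c))] with y hy
      exact subset_convexHull ℝ _
        ⟨P c, _, isWhitneyPair_of_dist_lt (hpos c) (hP c) hy, rfl⟩⟩
  refine ⟨fun x => if hx : x ∈ Hᶜ then g ⟨x, hx⟩ else 0, ?_,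
    fun x hx => by simpa [hx] using hg ⟨x, hx⟩⟩
  rw [continuousOn_iff_continuous_domRestrict, Set.domRestrict_dite]
  exact g.continuous

end WhitneyPair

section NontangentialLimit

variable {X E : Type*} [PseudoMetricSpace X] [SeminormedAddCommGroup E] {H : Set X}
  {u : ℕ → H → E}

lemma norm_oscValue_sub_mul_le {x : X} {p a : H} {ρ : ℝ} {n : ℕ} {v : E}
    (hxp : IsWhitneyPair H x p ρ) (hn : oscIndex u p ρ = n) (h6 : 6 ≤ n)
    (hna : ‖u n a‖ + 1 ≤ √n) :
    ‖oscValue u p ρ - v‖ * (infDist x H / dist x a) ≤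
      (n : ℝ)⁻¹ + ‖u n a - v‖ + 4 * ((√n)⁻¹ + ‖v‖ / n) := by
  have ht0 : 0 ≤ infDist x H / dist x a := div_nonneg infDist_nonneg dist_nonneg
  by_cases hap : dist a p ≤ n * ρ
  · have ht1 : infDist x H / dist x a ≤ 1 :=
      div_le_one_of_le₀ (infDist_le_dist_of_mem a.2) dist_nonneg
    calc ‖oscValue u p ρ - v‖ * (infDist x H / dist x a)
        ≤ ((n : ℝ)⁻¹ + ‖u n a - v‖) * 1 :=
          mul_le_mul (norm_oscValue_sub_le hn (by omega) hap hna) ht1 ht0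
            (add_nonneg (by positivity) (norm_nonneg _))
      _ ≤ _ := by rw [mul_one]; exact le_add_of_nonneg_right (by positivity)
  · have hfar : infDist x H / dist x a ≤ 4 / n :=
      infDist_div_dist_le_of_isWhitneyPair hxp h6 ((not_le.1 hap).trans_eq (dist_comm _ _))
    have hval : ‖oscValue u p ρ - v‖ ≤ √n + ‖v‖ :=
      (norm_sub_le _ _).trans (by rw [← hn]; gcongr; exact norm_oscValue_le)
    have hsqrt : (√n)⁻¹ = √n / n := by rw [Real.sqrt_div_self', one_div]
    calc ‖oscValue u p ρ - v‖ * (infDist x H / dist x a)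
        ≤ (√n + ‖v‖) * (4 / n) := mul_le_mul hval hfar ht0 (by positivity)
      _ = 4 * ((√n)⁻¹ + ‖v‖ / n) := by rw [hsqrt]; ring
      _ ≤ _ := le_add_of_nonneg_left (by positivity)

theorem tendsto_norm_sub_mul_infDist_div_dist_of_mem_convexHull [NormedSpace ℝ E]
    (hH : IsClosed H) {a : H} {v : E} (hu : ∀ n, ContinuousAt (u n) a)
    (hv : Tendsto (fun n => u n a) atTop (𝓝 v))
    {g : X → E} (hg : ∀ x ∉ H, g x ∈ convexHull ℝ
      {w | ∃ (p : H) (ρ : ℝ), IsWhitneyPair H x p ρ ∧ oscValue u p ρ = w}) :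
    Tendsto (fun x => ‖g x - v‖ * (infDist x H / dist x a)) (𝓝[Hᶜ] (a : X)) (𝓝 0) := by
  set e : ℕ → ℝ := fun n => (n : ℝ)⁻¹ + ‖u n a - v‖ + 4 * ((√n)⁻¹ + ‖v‖ / n)
  have hsqrt : Tendsto (fun n : ℕ => √n) atTop atTop :=
    Real.tendsto_sqrt_atTop.comp tendsto_natCast_atTop_atTop
  have he : Tendsto e atTop (𝓝 0) := by
    simpa using
      (tendsto_inv_atTop_nhds_zero_nat.add (tendsto_iff_norm_sub_tendsto_zero.1 hv)).add
        ((tendsto_inv_atTop_zero.comp hsqrt).add (tendsto_const_div_atTop_nhds_zero_nat ‖v‖)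
          |>.const_mul 4)
  have hgood : ∀ᶠ n in atTop, 6 ≤ n ∧ ‖u n a‖ + 1 ≤ √n := by
    filter_upwards [eventually_ge_atTop 6, (hv.norm.add_const 1).eventually_le_const
      (lt_add_one (‖v‖ + 1)), hsqrt.eventually_ge_atTop (‖v‖ + 1 + 1)] with n h6 hle hge
    exact ⟨h6, hle.trans hge⟩
  rw [Metric.tendsto_nhds]
  intro ε hε
  obtain ⟨K, hK⟩ := eventually_atTop.1 (hgood.and (he.eventually (gt_mem_nhds hε)))
  obtain ⟨δ, hδ, hδK⟩ := exists_forall_le_oscIndex (hu K)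
  filter_upwards [self_mem_nhdsWithin,
    mem_nhdsWithin_of_mem_nhds (ball_mem_nhds (a : X) (by positivity : 0 < δ / 7))]
    with x (hxH : x ∉ H) (hxa : dist x a < δ / 7)
  have hxH_pos : 0 < infDist x H := (hH.notMem_iff_infDist_pos ⟨a, a.2⟩).1 hxH
  have hxH_le : infDist x H ≤ dist x a := infDist_le_dist_of_mem a.2
  have ht : 0 < infDist x H / dist x a := div_pos hxH_pos (hxH_pos.trans_le hxH_le)
  rw [dist_zero_right, Real.norm_of_nonneg (by positivity), ← lt_div_iff₀ ht,
    ← mem_ball_iff_norm]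
  refine convexHull_min ?_ (convex_ball v _) (hg x hxH)
  rintro _ ⟨p, ρ, hxp, rfl⟩
  have hρ : ρ < δ := by linarith [hxp.2.2.1]
  have hpa : dist p a < δ := by
    rw [Subtype.dist_eq]
    have := dist_triangle_left (p : X) a x
    linarith [hxp.2.2.1, hxp.2.2.2]
  obtain ⟨⟨h6, hna⟩, hlt⟩ := hK _ (hδK p ρ hpa hxp.1 hρ)
  rw [mem_ball_iff_norm, lt_div_iff₀ ht]
  exact (norm_oscValue_sub_mul_le hxp rfl h6 hna).trans_lt hlt

end NontangentialLimit

/-- Extension theorem for vector-valued Baire one functions with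
non-tangential limits. -/
theorem baire_one_extension_nontangential {X Z : Type*} [MetricSpace X]
    [NormedAddCommGroup Z] [NormedSpace ℝ Z]
    (H : Set X) (hH : IsClosed H) (f : H → Z) (hf : IsBaireOne f) :
    ∃ g : X → Z, ContinuousOn g Hᶜ ∧
      ∀ a, ∀ ha : a ∈ frontier H,
        Tendsto (fun x => ‖g x - f ⟨a, hH.frontier_subset ha⟩‖ * (infDist x H / dist x a))
          (nhdsWithin a Hᶜ) (nhds 0) := by
  obtain ⟨u, hu, hlim⟩ := hf
  rcases H.eq_empty_or_nonempty with rfl | hne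
  · exact ⟨0, continuousOn_const, fun a ha => by simp at ha⟩
  obtain ⟨g, hg_cont, hg⟩ := exists_continuousOn_forall_mem_convexHull hH hne (oscValue u)
  exact ⟨g, hg_cont, fun a ha => tendsto_norm_sub_mul_infDist_div_dist_of_mem_convexHull
    hH (fun n => (hu n).continuousAt) (hlim _) hg⟩
end

section
/- Let (X,d) be a metric space, H ⊂ X a closed set, Z a normed linear space and f : H → Z a Baire one function. Then there exists a continuous function g : (X \ H) → Z such that lim_{x→a, x∈X\H} g(x) = f(a) for every a ∈ ∂H at which f is continuous. -/
open Filter Topology Metric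

/-!
Dugundji's construction. For `x ∉ H`, let `t x` be the convex hull of the values of `f` at the
points of `H` lying within `3 · infDist x H` of `x`. Any point of `H` within `2 · infDist x H`
of `x` stays in that window for all points near `x`, so the convex sets `t x` admit local constant
selections, and a partition of unity glues them into a continuous selection `g`. As `x → a ∈ H`
the window around `x` shrinks into small balls around `a`, so at a continuity point of `f` the
sets `t x`, hence the values `g x`, converge to `f a`.
-/

open Set

namespace Metric

variable {X : Type*} [MetricSpace X] {H : Set X}

lemma eventually_dist_lt_three_mul_infDist {x b : X} (hx : 0 < infDist x H)
    (hb : dist b x < 2 * infDist x H) : ∀ᶠ y in 𝓝 x, dist b y < 3 * infDist y H :=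
  (isOpen_lt (continuous_const.dist continuous_id)
    ((continuous_infDist_pt H).const_mul 3)).mem_nhds
    (show dist b (id x) < 3 * infDist x H by simp only [id]; linarith)

lemma dist_lt_four_mul_of_dist_lt_three_mul_infDist {x a b : X} (ha : a ∈ H)
    (hb : dist b x < 3 * infDist x H) : dist b a < 4 * dist x a := by
  have hxa : infDist x H ≤ dist x a := infDist_le_dist_of_mem ha
  linarith [dist_triangle b x a]

end Metric

section Dugundji

variable {X Z : Type*} [MetricSpace X] [NormedAddCommGroup Z] [NormedSpace ℝ Z] {H : Set X}

theorem IsClosed.exists_continuous_forall_mem_convexHull_image (hH : IsClosed H)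
    (hne : H.Nonempty) (f : H → Z) :
    ∃ G : C(↥Hᶜ, Z), ∀ x : ↥Hᶜ,
      G x ∈ convexHull ℝ (f '' {b | dist (b : X) x < 3 * infDist (x : X) H}) := by
  refine exists_continuous_forall_mem_convex_of_local_const (fun _ => convex_convexHull ℝ _)
    fun x => ?_
  have hx : 0 < infDist (x : X) H := (hH.notMem_iff_infDist_pos hne).1 x.2
  obtain ⟨b, hbH, hbx⟩ : ∃ b ∈ H, dist (x : X) b < 2 * infDist (x : X) H :=
    (infDist_lt_iff hne).1 (by linarith)
  refine ⟨f ⟨b, hbH⟩, ?_⟩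
  filter_upwards [continuous_subtype_val.continuousAt.eventually
    (eventually_dist_lt_three_mul_infDist hx (by rwa [dist_comm]))] with y hy
  exact subset_convexHull ℝ _ (mem_image_of_mem f hy)

theorem IsClosed.exists_continuousOn_compl_tendsto_of_continuousAt (hH : IsClosed H)
    (f : H → Z) :
    ∃ g : X → Z, ContinuousOn g Hᶜ ∧
      ∀ a : H, ContinuousAt f a → Tendsto g (𝓝[Hᶜ] a) (𝓝 (f a)) := by
  rcases H.eq_empty_or_nonempty with rfl | hne
  · exact ⟨0, continuousOn_const, fun a => a.2.elim⟩
  obtain ⟨G, hG⟩ := hH.exists_continuous_forall_mem_convexHull_image hne f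
  have hextend : ∀ x : ↥Hᶜ, Function.extend Subtype.val G 0 x = G x :=
    Subtype.val_injective.extend_apply G 0
  refine ⟨Function.extend Subtype.val G 0, ?_, fun a hfa => ?_⟩
  · rw [continuousOn_iff_continuous_domRestrict]
    convert G.continuous using 1
    exact funext hextend
  rw [Metric.tendsto_nhdsWithin_nhds]
  intro ε hε
  obtain ⟨δ, hδ, hfδ⟩ := Metric.continuousAt_iff.1 hfa ε hε
  refine ⟨δ / 4, by positivity, fun x hx hxa => ?_⟩
  rw [hextend ⟨x, hx⟩]
  refine convexHull_min ?_ (convex_ball (f a) ε) (hG ⟨x, hx⟩)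
  refine image_subset_iff.2 fun b hb => hfδ ?_
  have := dist_lt_four_mul_of_dist_lt_three_mul_infDist a.2 hb
  rw [Subtype.dist_eq]
  linarith

end Dugundji

theorem baire_one_extension_continuity_points_general {X Z : Type*} [MetricSpace X]
    [NormedAddCommGroup Z] [NormedSpace ℝ Z]
    (H : Set X) (hH : IsClosed H) (f : H → Z) :
    ∃ g : X → Z, ContinuousOn g Hᶜ ∧
      ∀ a, ∀ ha : a ∈ frontier H, ContinuousAt f ⟨a, hH.frontier_subset ha⟩ →
        Tendsto g (nhdsWithin a Hᶜ) (nhds (f ⟨a, hH.frontier_subset ha⟩)) := by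
  obtain ⟨g, hg, hlim⟩ := hH.exists_continuousOn_compl_tendsto_of_continuousAt f
  exact ⟨g, hg, fun a ha => hlim ⟨a, hH.frontier_subset ha⟩⟩

/-- Extension theorem for vector-valued Baire one functions preserving limits
at points of continuity on the boundary. -/
theorem baire_one_extension_continuity_points {X Z : Type*} [MetricSpace X]
    [NormedAddCommGroup Z] [NormedSpace ℝ Z]
    (H : Set X) (hH : IsClosed H) (f : H → Z) (hf : IsBaireOne f) :
    ∃ g : X → Z, ContinuousOn g Hᶜ ∧
      ∀ a, ∀ ha : a ∈ frontier H, ContinuousAt f ⟨a, hH.frontier_subset ha⟩ →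
        Tendsto g (nhdsWithin a Hᶜ) (nhds (f ⟨a, hH.frontier_subset ha⟩)) :=
  baire_one_extension_continuity_points_general H hH f
end

section
/- Let (X,d) be a metric space, H ⊂ X a closed set, Z a normed linear space and f : H → Z a Baire one function. Then there exists a function F : X → Z extending f (i.e. F = f on H) such that F restricted to X \ H is continuous, and F is continuous at every point a ∈ H at which f (as a function on H) is continuous. -/
/-!
Dugundji's construction: cover `X \ H` by the balls `B(p, d(p, H) / 2)`, pick for each `p` a
point `c p ∈ H` with `d(p, c p) < 2 d(p, H)`, and off `H` let `F` be the average of the values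
`f (c p)` with respect to a partition of unity subordinate to these balls. Every ball containing
a point `y` has its `c p` within `6 d(y, a)` of any `a ∈ H`, so `F y` lies in the convex hull of
values of `f` taken close to `a`.
-/

open Filter Topology

open Set Metric

section Dugundji

variable {X Z : Type*} [MetricSpace X] [NormedAddCommGroup Z] [NormedSpace ℝ Z]

theorem dist_lt_six_mul_of_dist_lt_half {p y q a : X} {r : ℝ} (hr : r ≤ dist p a)
    (hy : dist y p < r / 2) (hq : dist q p < 2 * r) : dist q a < 6 * dist y a := by
  have hpa : dist p a ≤ dist y p + dist y a := by
    simpa only [dist_comm y p] using dist_triangle p y a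
  linarith [dist_triangle q p a]

theorem exists_partitionOfUnity_compl_dist_lt {H : Set X} (hH : IsClosed H) (hne : H.Nonempty) :
    ∃ (c : ↥Hᶜ → H) (ρ : PartitionOfUnity ↥Hᶜ ↥Hᶜ),
      ∀ p y, ∀ a ∈ H, ρ p y ≠ 0 → dist (c p : X) a < 6 * dist (y : X) a := by
  have hpos (p : ↥Hᶜ) : 0 < infDist (p : X) H := (hH.notMem_iff_infDist_pos hne).1 p.2
  have hnear (p : ↥Hᶜ) : ∃ q : H, dist (q : X) p < 2 * infDist (p : X) H := by
    obtain ⟨q, hqH, hq⟩ := (infDist_lt_iff hne).1 (by linarith [hpos p] :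
      infDist (p : X) H < 2 * infDist (p : X) H)
    exact ⟨⟨q, hqH⟩, by rwa [dist_comm]⟩
  choose c hc using hnear
  let U (p : ↥Hᶜ) : Set ↥Hᶜ := {y | dist (y : X) p < infDist (p : X) H / 2}
  have hU (p : ↥Hᶜ) : IsOpen (U p) := isOpen_lt (by fun_prop) continuous_const
  have hcover : univ ⊆ ⋃ p, U p := fun y _ =>
    mem_iUnion.2 ⟨y, by simp only [U, mem_ofPred_eq, dist_self]; linarith [hpos y]⟩
  obtain ⟨ρ, hρ⟩ := PartitionOfUnity.exists_isSubordinate isClosed_univ U hU hcover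
  refine ⟨c, ρ, fun p y a ha hρy => ?_⟩
  exact dist_lt_six_mul_of_dist_lt_half (infDist_le_dist_of_mem ha)
    (hρ p (subset_tsupport _ hρy)) (hc p)

open scoped Classical in
noncomputable def averagedExtension {H : Set X} (f : H → Z) (c : ↥Hᶜ → H)
    (ρ : PartitionOfUnity ↥Hᶜ ↥Hᶜ) (x : X) : Z :=
  if hx : x ∈ H then f ⟨x, hx⟩ else ∑ᶠ p, ρ p ⟨x, hx⟩ • f (c p)

section averagedExtension

variable {H : Set X} (f : H → Z) (c : ↥Hᶜ → H) (ρ : PartitionOfUnity ↥Hᶜ ↥Hᶜ)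

theorem averagedExtension_of_mem {x : X} (hx : x ∈ H) :
    averagedExtension f c ρ x = f ⟨x, hx⟩ :=
  dif_pos hx

theorem averagedExtension_of_notMem {x : X} (hx : x ∉ H) :
    averagedExtension f c ρ x = ∑ᶠ p, ρ p ⟨x, hx⟩ • f (c p) :=
  dif_neg hx

theorem continuousOn_averagedExtension : ContinuousOn (averagedExtension f c ρ) Hᶜ := by
  rw [continuousOn_iff_continuous_domRestrict]
  have hrestrict : Hᶜ.domRestrict (averagedExtension f c ρ) = fun y => ∑ᶠ p, ρ p y • f (c p) :=
    funext fun y => averagedExtension_of_notMem f c ρ y.2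
  rw [hrestrict]
  exact ρ.continuous_finsum_smul fun _ _ _ => continuousAt_const

theorem averagedExtension_mem_of_convex {t : Set Z} (ht : Convex ℝ t) {x : X} (hx : x ∉ H)
    (hct : ∀ p, ρ p ⟨x, hx⟩ ≠ 0 → f (c p) ∈ t) : averagedExtension f c ρ x ∈ t := by
  rw [averagedExtension_of_notMem f c ρ hx]
  exact ρ.finsum_smul_mem_convex (g := fun p _ => f (c p)) (mem_univ _) hct ht

theorem continuousAt_averagedExtension
    (hcρ : ∀ p y, ∀ a ∈ H, ρ p y ≠ 0 → dist (c p : X) a < 6 * dist (y : X) a)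
    {a : X} (ha : a ∈ H) (hfa : ContinuousAt f ⟨a, ha⟩) :
    ContinuousAt (averagedExtension f c ρ) a := by
  rw [Metric.continuousAt_iff'] at hfa ⊢
  intro ε hε
  obtain ⟨δ, hδ, hfδ⟩ := Metric.eventually_nhds_iff.1 (hfa ε hε)
  refine Metric.eventually_nhds_iff.2 ⟨δ / 6, by positivity, fun x hxa => ?_⟩
  rw [averagedExtension_of_mem f c ρ ha, ← mem_ball]
  by_cases hx : x ∈ H
  · rw [averagedExtension_of_mem f c ρ hx]
    exact hfδ (show dist x a < δ by linarith)
  · refine averagedExtension_mem_of_convex f c ρ (convex_ball _ _) hx fun p hp => hfδ ?_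
    exact show dist (c p : X) a < δ by linarith [hcρ p ⟨x, hx⟩ a ha hp]

end averagedExtension

end Dugundji

theorem baire_one_extension_preserving_continuity_general {X Z : Type*} [MetricSpace X]
    [NormedAddCommGroup Z] [NormedSpace ℝ Z]
    (H : Set X) (hH : IsClosed H) (f : H → Z) :
    ∃ F : X → Z,
      (∀ x, ∀ hx : x ∈ H, F x = f ⟨x, hx⟩) ∧
      ContinuousOn F Hᶜ ∧
      (∀ a, ∀ ha : a ∈ H, ContinuousAt f ⟨a, ha⟩ → ContinuousAt F a) := by
  rcases H.eq_empty_or_nonempty with rfl | hne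
  · exact ⟨0, by simp, continuousOn_const, by simp⟩
  obtain ⟨c, ρ, hcρ⟩ := exists_partitionOfUnity_compl_dist_lt hH hne
  exact ⟨averagedExtension f c ρ, fun x hx => averagedExtension_of_mem f c ρ hx,
    continuousOn_averagedExtension f c ρ,
    fun a ha => continuousAt_averagedExtension f c ρ hcρ ha⟩

/-- A Baire one function on a closed subset of a metric space extends to a
function on the whole space that is continuous off the set and continuous at
every point where the original function is continuous. -/
theorem baire_one_extension_preserving_continuity {X Z : Type*} [MetricSpace X]
    [NormedAddCommGroup Z] [NormedSpace ℝ Z]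
    (H : Set X) (hH : IsClosed H) (f : H → Z) (hf : IsBaireOne f) :
    ∃ F : X → Z,
      (∀ x, ∀ hx : x ∈ H, F x = f ⟨x, hx⟩) ∧
      ContinuousOn F Hᶜ ∧
      (∀ a, ∀ ha : a ∈ H, ContinuousAt f ⟨a, ha⟩ → ContinuousAt F a) :=
  baire_one_extension_preserving_continuity_general H hH f
end

section
/- Let Y be a metric space and Z a normed linear space. If f : Y → Z is a Baire one function, then f is the pointwise limit of a sequence {f_n} of bounded locally Lipschitz functions f_n : Y → Z such that the pair ({f_n}, f) has UCPC, and such that {f_n} is uniformly bounded on B_Y(a,r) whenever a ∈ Y, r ∈ (0,∞) ∪ {∞} and f is bounded on B_Y(a,2r). -/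
/-!
Let `u n → f` pointwise with `u n` continuous, and let `g n` be `f` radially truncated at height
`n`. At scale `r`, take a locally Lipschitz partition of unity `φ` subordinate to the sets
`ball i r ∩ (u n)⁻¹' ball (u n i) r`, the averages `S = ∑ φ i • g n i` and `U = ∑ φ i • u n i`, and
the average `ρ` of the oscillations of `g n` on the balls `ball i r`. Then `‖S - g n‖ ≤ ρ` and
`‖U - u n‖ ≤ r`, so `F n = S + clampNorm ρ (U - S)`, which moves from `S` towards `U` by at most
`ρ`, satisfies `‖F n - g n‖ ≤ 2 r + 2 ‖u n - g n‖`; this gives pointwise convergence as `r → 0`.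
On the other hand `‖F n y - z‖ ≤ ‖S y - z‖ + ρ y`, and both terms are at most a multiple of how
far `g n` strays from `z` on `ball y (2 r)`; this gives UCPC and the uniform bounds on balls.
-/

open Filter Topology Metric ENNReal

/-- The pair `({h n}, f)` has the property of uniform convergence at points of
continuity (UCPC): for every point `y₀` where `f` is continuous and every
`ε > 0` there are `k₀ ∈ ℕ` and a neighborhood `U` of `y₀` such that
`‖h k y - f y₀‖ < ε` for every `k ≥ k₀` and `y ∈ U`. -/
def UCPC {Y Z : Type*} [TopologicalSpace Y] [NormedAddCommGroup Z]
    (h : ℕ → Y → Z) (f : Y → Z) : Prop :=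
  ∀ y₀, ContinuousAt f y₀ → ∀ ε > (0 : ℝ), ∃ k₀ : ℕ, ∃ U ∈ nhds y₀,
    ∀ k ≥ k₀, ∀ y ∈ U, ‖h k y - f y₀‖ < ε

open Function Set

section ClampNorm

variable {E : Type*} [NormedAddCommGroup E]

theorem clampNorm_coeff_nonneg (r : ℝ) (v : E) : 0 ≤ min ‖v‖ (max r 0) / ‖v‖ := by
  positivity

theorem clampNorm_coeff_le_one (r : ℝ) (v : E) : min ‖v‖ (max r 0) / ‖v‖ ≤ 1 :=
  div_le_one_of_le₀ (min_le_left _ _) (norm_nonneg v)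

theorem clampNorm_coeff_mul_norm (r : ℝ) (v : E) :
    min ‖v‖ (max r 0) / ‖v‖ * ‖v‖ = min ‖v‖ (max r 0) := by
  rcases eq_or_ne v 0 with rfl | hv
  · simp
  · exact div_mul_cancel₀ _ (norm_ne_zero_iff.2 hv)

variable [NormedSpace ℝ E]

/-- Clipping the radius at `0` keeps the map Lipschitz jointly in `(r, v)`; at `v = 0` the
coefficient is `0 / 0 = 0`. -/
noncomputable def clampNorm (r : ℝ) (v : E) : E := (min ‖v‖ (max r 0) / ‖v‖) • v

theorem norm_clampNorm (r : ℝ) (v : E) : ‖clampNorm r v‖ = min ‖v‖ (max r 0) := by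
  rw [clampNorm, norm_smul, Real.norm_of_nonneg (clampNorm_coeff_nonneg r v),
    clampNorm_coeff_mul_norm]

theorem norm_clampNorm_le (r : ℝ) (v : E) : ‖clampNorm r v‖ ≤ max r 0 :=
  (norm_clampNorm r v).trans_le (min_le_right _ _)

theorem norm_clampNorm_le_norm (r : ℝ) (v : E) : ‖clampNorm r v‖ ≤ ‖v‖ :=
  (norm_clampNorm r v).trans_le (min_le_left _ _)

theorem clampNorm_of_norm_le {r : ℝ} {v : E} (h : ‖v‖ ≤ r) : clampNorm r v = v := by
  rcases eq_or_ne v 0 with rfl | hv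
  · simp [clampNorm]
  · rw [clampNorm, min_eq_left (h.trans (le_max_left r 0)),
      div_self (norm_ne_zero_iff.2 hv), one_smul]

theorem norm_clampNorm_sub_self {r : ℝ} (hr : 0 ≤ r) (v : E) :
    ‖clampNorm r v - v‖ = max (‖v‖ - r) 0 := by
  set c := min ‖v‖ (max r 0) / ‖v‖
  calc ‖c • v - v‖ = ‖(1 - c) • v‖ := by rw [← norm_neg, sub_smul, one_smul, neg_sub]
    _ = ‖v‖ - c * ‖v‖ := by
      rw [norm_smul, Real.norm_of_nonneg (sub_nonneg.2 (clampNorm_coeff_le_one r v)), sub_mul,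
        one_mul]
    _ = max (‖v‖ - r) 0 := by
      rw [clampNorm_coeff_mul_norm, max_eq_left hr]
      rcases le_total ‖v‖ r with h | h
      · rw [min_eq_left h, max_eq_right (by linarith), sub_self]
      · rw [min_eq_right h, max_eq_left (by linarith)]

theorem norm_clampNorm_sub_clampNorm_le (r : ℝ) (v w : E) :
    ‖clampNorm r v - clampNorm r w‖ ≤ 2 * ‖v - w‖ := by
  wlog hwv : ‖w‖ ≤ ‖v‖ generalizing v w
  · rw [norm_sub_rev, norm_sub_rev v]
    exact this w v (le_of_not_ge hwv)
  set σ := max r 0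
  set cv := min ‖v‖ σ / ‖v‖
  set cw := min ‖w‖ σ / ‖w‖
  have hcv1 : cv ≤ 1 := clampNorm_coeff_le_one r v
  have hcv : cv * ‖v‖ = min ‖v‖ σ := clampNorm_coeff_mul_norm r v
  have hcw : cw * ‖w‖ = min ‖w‖ σ := clampNorm_coeff_mul_norm r w
  have hlow : cv * ‖w‖ ≤ min ‖w‖ σ := by
    refine le_min (mul_le_of_le_one_left (norm_nonneg w) hcv1) ?_
    calc cv * ‖w‖ ≤ cv * ‖v‖ := by gcongr
      _ ≤ σ := hcv ▸ min_le_right _ _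
  have hhigh : min ‖w‖ σ ≤ cv * ‖v‖ := hcv ▸ min_le_min_right σ hwv
  -- The difference is `cv • (v - w)` plus a multiple of `w` of length between `0` and
  -- `cv * (‖v‖ - ‖w‖)`, by `hlow` and `hhigh`.
  have hsplit : clampNorm r v - clampNorm r w = cv • (v - w) + (cv - cw) • w := by
    simp only [clampNorm, smul_sub, sub_smul]
    abel
  calc ‖clampNorm r v - clampNorm r w‖ ≤ ‖cv • (v - w)‖ + ‖(cv - cw) • w‖ :=
        hsplit ▸ norm_add_le _ _
    _ = cv * ‖v - w‖ + |cv * ‖w‖ - cw * ‖w‖| := by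
        rw [norm_smul, norm_smul, Real.norm_of_nonneg (clampNorm_coeff_nonneg r v),
          Real.norm_eq_abs, ← sub_mul, abs_mul, abs_norm]
    _ ≤ ‖v - w‖ + (‖v‖ - ‖w‖) := by
        rw [hcw, abs_of_nonpos (by linarith)]
        gcongr
        · exact mul_le_of_le_one_left (norm_nonneg _) hcv1
        · nlinarith [clampNorm_coeff_nonneg r v]
    _ ≤ 2 * ‖v - w‖ := by linarith [norm_sub_norm_le v w]

theorem norm_clampNorm_sub_clampNorm_le_abs (r s : ℝ) (v : E) :
    ‖clampNorm r v - clampNorm s v‖ ≤ |r - s| := by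
  calc ‖clampNorm r v - clampNorm s v‖
        = |min ‖v‖ (max r 0) / ‖v‖ * ‖v‖ - min ‖v‖ (max s 0) / ‖v‖ * ‖v‖| := by
        rw [clampNorm, clampNorm, ← sub_smul, norm_smul, Real.norm_eq_abs, ← sub_mul, abs_mul,
          abs_norm]
    _ = |min ‖v‖ (max r 0) - min ‖v‖ (max s 0)| := by
        rw [clampNorm_coeff_mul_norm, clampNorm_coeff_mul_norm]
    _ ≤ |r - s| := by
        refine (abs_min_sub_min_le_max _ _ _ _).trans ?_
        simpa using abs_max_sub_max_le_abs r s 0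

theorem lipschitzWith_clampNorm : LipschitzWith 3 (fun p : ℝ × E => clampNorm p.1 p.2) := by
  refine (LipschitzWith.uncurry (f := clampNorm) (Kα := 1) (Kβ := 2) (fun v => ?_)
    (fun r => ?_)).weaken (by norm_num)
  · exact LipschitzWith.of_dist_le_mul fun r s => by
      simpa [dist_eq_norm] using norm_clampNorm_sub_clampNorm_le_abs r s v
  · exact LipschitzWith.of_dist_le_mul fun v w => by
      simpa [dist_eq_norm] using norm_clampNorm_sub_clampNorm_le r v w

end ClampNorm

section LocallyLipschitz

variable {α ι E : Type*} [PseudoEMetricSpace α] [NormedAddCommGroup E]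

theorem LocallyLipschitz.smul [NormedSpace ℝ E] {f : α → ℝ} {g : α → E}
    (hf : LocallyLipschitz f) (hg : LocallyLipschitz g) : LocallyLipschitz fun x => f x • g x :=
  (contDiff_smul (𝕜 := ℝ) (𝕜' := ℝ) (n := 1)).locallyLipschitz.comp (hf.prodMk hg)

theorem LocallyLipschitz.inv₀ {f : α → ℝ} (hf : LocallyLipschitz f) (h0 : ∀ x, f x ≠ 0) :
    LocallyLipschitz fun x => (f x)⁻¹ := by
  intro x
  obtain ⟨K, t, ht, hK⟩ := (contDiffAt_inv ℝ (h0 x)).exists_lipschitzOnWith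
  obtain ⟨Kf, s, hs, hKf⟩ := hf x
  exact ⟨K * Kf, s ∩ f ⁻¹' t, inter_mem hs (hf.continuous.continuousAt ht),
    hK.comp (hKf.mono inter_subset_left) fun _ hy => hy.2⟩

theorem LocallyLipschitz.finset_sum {s : Finset ι} {g : ι → α → E}
    (hg : ∀ i ∈ s, LocallyLipschitz (g i)) : LocallyLipschitz fun x => ∑ i ∈ s, g i x := by
  classical
  induction s using Finset.induction_on with
  | empty => simpa using LocallyLipschitz.const (0 : E)
  | insert i s hi ih =>
    simp only [Finset.sum_insert hi]
    exact (hg i (Finset.mem_insert_self i s)).add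
      (ih fun j hj => hg j (Finset.mem_insert_of_mem hj))

theorem LocallyLipschitz.finsum {g : ι → α → E} (hg : ∀ i, LocallyLipschitz (g i))
    (hlf : LocallyFinite fun i => support (g i)) : LocallyLipschitz fun x => ∑ᶠ i, g i x := by
  intro x
  obtain ⟨I, hI⟩ := hlf.exists_finset_support x
  obtain ⟨K, t, ht, hK⟩ := LocallyLipschitz.finset_sum (s := I) (fun i _ => hg i) x
  refine ⟨K, t ∩ {y | (support fun i => g i y) ⊆ I}, inter_mem ht hI, fun y hy z hz => ?_⟩
  dsimp only
  rw [finsum_eq_sum_of_support_subset _ hy.2, finsum_eq_sum_of_support_subset _ hz.2]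
  exact hK hy.1 hz.1

end LocallyLipschitz

section LipschitzPartitionOfUnity

variable {X ι E : Type*} [NormedAddCommGroup E] [NormedSpace ℝ E]

theorem IsOpen.exists_lipschitzWith_support_eq [PseudoMetricSpace X] {V : Set X}
    (hV : IsOpen V) : ∃ ψ : X → ℝ, LipschitzWith 1 ψ ∧ (∀ x, 0 ≤ ψ x) ∧ support ψ = V := by
  rcases Vᶜ.eq_empty_or_nonempty with h | h
  · refine ⟨fun _ => 1, LipschitzWith.const' 1, fun _ => zero_le_one, ?_⟩
    rw [support_const one_ne_zero, ← compl_empty_iff.1 h]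
  · refine ⟨fun x => infDist x Vᶜ, lipschitz_infDist_pt _, fun _ => infDist_nonneg, ?_⟩
    ext x
    rw [mem_support, ← not_not (a := x ∈ V), ← mem_compl_iff,
      hV.isClosed_compl.notMem_iff_infDist_pos h, infDist_nonneg.lt_iff_ne']

theorem exists_partitionOfUnity_locallyLipschitz [PseudoMetricSpace X] {u : ι → Set X}
    (hu : ∀ i, IsOpen (u i)) (hcover : ⋃ i, u i = univ) :
    ∃ φ : PartitionOfUnity ι X, (∀ i, support (φ i) ⊆ u i) ∧ ∀ i, LocallyLipschitz (φ i) := by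
  obtain ⟨v, hvo, hvc, hvlf, hvu⟩ := precise_refinement u hu hcover
  choose ψ hψlip hψnn hψsupp using fun i => (hvo i).exists_lipschitzWith_support_eq
  have hlf : LocallyFinite fun i => support (ψ i) := by simpa only [hψsupp] using hvlf
  set σ : X → ℝ := fun x => ∑ᶠ i, ψ i x
  have hσ : LocallyLipschitz σ := .finsum (fun i => (hψlip i).locallyLipschitz) hlf
  have hσpos : ∀ x, 0 < σ x := by
    intro x
    obtain ⟨i, hi⟩ := mem_iUnion.1 (hvc ▸ mem_univ x)
    exact finsum_pos (fun j => hψnn j x) ⟨i, (hψnn i x).lt_of_ne' ((hψsupp i).ge hi)⟩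
      (hlf.point_finite x)
  have hsum : ∀ x, ∑ᶠ i, ψ i x * (σ x)⁻¹ = 1 := fun x => by
    rw [← finsum_mul, mul_inv_cancel₀ (hσpos x).ne']
  have hφ : ∀ i, LocallyLipschitz fun x => ψ i x * (σ x)⁻¹ := fun i =>
    (hψlip i).locallyLipschitz.smul (hσ.inv₀ fun x => (hσpos x).ne')
  refine ⟨{ toFun := fun i => ⟨fun x => ψ i x * (σ x)⁻¹, (hφ i).continuous⟩
            locallyFinite' := hlf.subset fun i x hx => left_ne_zero_of_mul hx
            nonneg' := fun i x => mul_nonneg (hψnn i x) (inv_nonneg.2 (hσpos x).le)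
            sum_eq_one' := fun x _ => hsum x
            sum_le_one' := fun x => (hsum x).le },
    fun i x hx => hvu i ((hψsupp i).le (left_ne_zero_of_mul hx)), hφ⟩

namespace PartitionOfUnity

variable [TopologicalSpace X] (φ : PartitionOfUnity ι X) (x : X)

theorem norm_finsum_smul_sub_le_finsum {c : ι → E} {z : E} {w : ι → ℝ}
    (h : ∀ i, φ i x ≠ 0 → ‖c i - z‖ ≤ w i) :
    ‖∑ᶠ i, φ i x • c i - z‖ ≤ ∑ᶠ i, φ i x • w i := by
  rw [← φ.sum_finsupport_smul_eq_finsum (fun i _ => c i),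
    ← φ.sum_finsupport_smul_eq_finsum (fun i _ => w i)]
  conv_lhs => rw [← one_smul ℝ z, ← φ.sum_finsupport (mem_univ x), Finset.sum_smul,
    ← Finset.sum_sub_distrib]
  simp_rw [← smul_sub]
  refine (norm_sum_le _ _).trans (Finset.sum_le_sum fun i hi => ?_)
  rw [norm_smul, Real.norm_of_nonneg (φ.nonneg i x), smul_eq_mul]
  exact mul_le_mul_of_nonneg_left (h i ((φ.mem_finsupport x).1 hi)) (φ.nonneg i x)

theorem norm_finsum_smul_sub_le {c : ι → E} {z : E} {B : ℝ}
    (h : ∀ i, φ i x ≠ 0 → ‖c i - z‖ ≤ B) : ‖∑ᶠ i, φ i x • c i - z‖ ≤ B :=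
  mem_closedBall_iff_norm.1 <| φ.finsum_smul_mem_convex (g := fun i _ => c i) (mem_univ x)
    (fun i hi => mem_closedBall_iff_norm.2 (h i hi)) (convex_closedBall z B)

theorem finsum_smul_le {w : ι → ℝ} {B : ℝ} (h : ∀ i, φ i x ≠ 0 → w i ≤ B) :
    ∑ᶠ i, φ i x • w i ≤ B :=
  φ.finsum_smul_mem_convex (g := fun i _ => w i) (mem_univ x) h (convex_Iic B)

end PartitionOfUnity

theorem PartitionOfUnity.locallyLipschitz_finsum_smul [PseudoMetricSpace X]
    (φ : PartitionOfUnity ι X) (hφ : ∀ i, LocallyLipschitz (φ i))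
    (c : ι → E) : LocallyLipschitz fun x => ∑ᶠ i, φ i x • c i :=
  .finsum (fun i => (hφ i).smul (.const (c i)))
    (φ.locallyFinite.subset fun i => support_smul_subset_left (φ i) fun _ => c i)

end LipschitzPartitionOfUnity

section Approximation

variable {Y E : Type*} [PseudoMetricSpace Y] [NormedAddCommGroup E] [NormedSpace ℝ E]

theorem norm_add_clampNorm_sub_sub_le {s u a b : E} {ρ ε : ℝ} (hs : ‖s - b‖ ≤ ρ)
    (hu : ‖u - a‖ ≤ ε) :
    ‖s + clampNorm ρ (u - s) - b‖ ≤ 2 * ε + 2 * ‖a - b‖ := by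
  have hus : ‖u - s‖ ≤ ε + ‖a - b‖ + ρ := by
    calc ‖u - s‖ = ‖(u - a) + (a - b) + (b - s)‖ := by congr 1; abel
      _ ≤ ‖u - a‖ + ‖a - b‖ + ‖b - s‖ := norm_add₃_le
      _ ≤ ε + ‖a - b‖ + ρ := by rw [norm_sub_rev b]; gcongr
  have hclamp : ‖s + clampNorm ρ (u - s) - u‖ ≤ ε + ‖a - b‖ := by
    rw [show s + clampNorm ρ (u - s) - u = clampNorm ρ (u - s) - (u - s) by abel,
      norm_clampNorm_sub_self ((norm_nonneg _).trans hs)]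
    exact max_le (by linarith) (by linarith [norm_nonneg (u - a), norm_nonneg (a - b)])
  calc ‖s + clampNorm ρ (u - s) - b‖
        = ‖(s + clampNorm ρ (u - s) - u) + (u - a) + (a - b)‖ := by congr 1; abel
    _ ≤ ‖s + clampNorm ρ (u - s) - u‖ + ‖u - a‖ + ‖a - b‖ := norm_add₃_le
    _ ≤ 2 * ε + 2 * ‖a - b‖ := by linarith

def LocallyControlled (Φ g : Y → E) (δ : ℝ) : Prop :=
  ∀ y z η, (∀ p, dist p y < δ → ‖g p - z‖ ≤ η) → ‖Φ y - z‖ ≤ 3 * η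

noncomputable def PartitionOfUnity.blend (φ : PartitionOfUnity Y Y) (r : ℝ) (g v : Y → E)
    (y : Y) : E :=
  ∑ᶠ i, φ i y • g i +
    clampNorm (∑ᶠ i, φ i y • diam (g '' ball i r)) (∑ᶠ i, φ i y • v i - ∑ᶠ i, φ i y • g i)

namespace PartitionOfUnity

variable (φ : PartitionOfUnity Y Y) {r : ℝ} {g v : Y → E}

theorem locallyLipschitz_blend (hφ : ∀ i, LocallyLipschitz (φ i)) :
    LocallyLipschitz (φ.blend r g v) := by
  have hS := φ.locallyLipschitz_finsum_smul hφ g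
  exact hS.add (lipschitzWith_clampNorm.locallyLipschitz.comp
    ((φ.locallyLipschitz_finsum_smul hφ _).prodMk ((φ.locallyLipschitz_finsum_smul hφ v).sub hS)))

theorem norm_blend_sub_le (hφ : ∀ i, support (φ i) ⊆ ball i r ∩ v ⁻¹' ball (v i) r)
    (hg : Bornology.IsBounded (range g)) (y : Y) :
    ‖φ.blend r g v y - g y‖ ≤ 2 * r + 2 * ‖v y - g y‖ := by
  refine norm_add_clampNorm_sub_sub_le (φ.norm_finsum_smul_sub_le_finsum y fun i hi => ?_)
    (φ.norm_finsum_smul_sub_le y fun i hi => ?_)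
  · rw [← dist_eq_norm]
    exact dist_le_diam_of_mem (hg.subset (image_subset_range _ _))
      (mem_image_of_mem g (mem_ball_self (dist_nonneg.trans_lt (hφ i hi).1)))
      (mem_image_of_mem g (hφ i hi).1)
  · rw [← dist_eq_norm, dist_comm]
    exact (hφ i hi).2.le

theorem locallyControlled_blend (hφ : ∀ i, support (φ i) ⊆ ball i r) :
    LocallyControlled (φ.blend r g v) g (2 * r) := by
  intro y z η hη
  have hnear : ∀ i, φ i y ≠ 0 → ∀ p, dist p i < r → dist p y < 2 * r := fun i hi p hp => by
    linarith [dist_triangle p i y, mem_ball'.1 (hφ i hi)]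
  have hS : ‖∑ᶠ i, φ i y • g i - z‖ ≤ η := φ.norm_finsum_smul_sub_le y fun i hi =>
    hη i (hnear i hi i (by rw [dist_self]; exact dist_nonneg.trans_lt (mem_ball'.1 (hφ i hi))))
  have hη0 : 0 ≤ η := (norm_nonneg _).trans hS
  have hρ : ∑ᶠ i, φ i y • diam (g '' ball i r) ≤ 2 * η := φ.finsum_smul_le y fun i hi => by
    refine diam_le_of_forall_dist_le (by positivity) ?_
    rintro _ ⟨p, hp, rfl⟩ _ ⟨q, hq, rfl⟩
    calc dist (g p) (g q) ≤ ‖g p - z‖ + ‖g q - z‖ := by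
          simpa only [dist_eq_norm] using dist_triangle_right (g p) (g q) z
      _ ≤ 2 * η := by linarith [hη p (hnear i hi p hp), hη q (hnear i hi q hq)]
  calc ‖φ.blend r g v y - z‖
        = ‖(∑ᶠ i, φ i y • g i - z) + clampNorm (∑ᶠ i, φ i y • diam (g '' ball i r))
            (∑ᶠ i, φ i y • v i - ∑ᶠ i, φ i y • g i)‖ := by rw [blend]; congr 1; abel
    _ ≤ η + max (2 * η) 0 := norm_add_le_of_le hS ((norm_clampNorm_le _ _).trans (by gcongr))
    _ = 3 * η := by rw [max_eq_left (by positivity)]; ring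

end PartitionOfUnity

theorem exists_locallyLipschitz_approx {g v : Y → E} (hg : Bornology.IsBounded (range g))
    (hv : Continuous v) {r : ℝ} (hr : 0 < r) :
    ∃ Φ : Y → E, LocallyLipschitz Φ ∧ (∀ y, ‖Φ y - g y‖ ≤ 2 * r + 2 * ‖v y - g y‖) ∧
      LocallyControlled Φ g (2 * r) := by
  obtain ⟨φ, hφu, hφlip⟩ := exists_partitionOfUnity_locallyLipschitz
    (u := fun i => ball i r ∩ v ⁻¹' ball (v i) r)
    (fun i => isOpen_ball.inter (isOpen_ball.preimage hv))
    (iUnion_eq_univ_iff.2 fun y => ⟨y, mem_ball_self hr, mem_ball_self hr⟩)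
  exact ⟨φ.blend r g v, φ.locallyLipschitz_blend hφlip, φ.norm_blend_sub_le hφu hg,
    φ.locallyControlled_blend fun i => (hφu i).trans inter_subset_left⟩

end Approximation

section Sequences

variable {Y Z : Type*} [NormedAddCommGroup Z] [NormedSpace ℝ Z] {F : ℕ → Y → Z} {f : Y → Z}
  {δ : ℕ → ℝ}

theorem tendsto_of_norm_sub_clampNorm_le (hδ : Tendsto δ atTop (𝓝 0)) {u : ℕ → Y → Z}
    (hu : ∀ y, Tendsto (fun n => u n y) atTop (𝓝 (f y)))
    (hnear : ∀ n y, ‖F n y - clampNorm n (f y)‖ ≤ δ n + 2 * ‖u n y - clampNorm n (f y)‖)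
    (y : Y) : Tendsto (fun n => F n y) atTop (𝓝 (f y)) := by
  rw [tendsto_iff_norm_sub_tendsto_zero]
  have hbound : Tendsto (fun n => δ n + 2 * ‖u n y - f y‖) atTop (𝓝 0) := by
    simpa using hδ.add ((tendsto_iff_norm_sub_tendsto_zero.1 (hu y)).const_mul 2)
  refine squeeze_zero' (.of_forall fun n => norm_nonneg _) ?_ hbound
  filter_upwards [eventually_ge_atTop ⌈‖f y‖⌉₊] with n hn
  simpa only [clampNorm_of_norm_le ((Nat.le_ceil _).trans (Nat.cast_le.2 hn))] using hnear n y

variable [PseudoMetricSpace Y]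

theorem norm_le_of_locallyControlled
    (hloc : ∀ n, LocallyControlled (F n) (fun y => clampNorm n (f y)) (δ n)) (n : ℕ) (y : Y) :
    ‖F n y‖ ≤ 3 * n := by
  simpa using hloc n y 0 n fun p _ => by
    simpa using (norm_clampNorm_le (n : ℝ) (f p)).trans_eq (max_eq_left n.cast_nonneg)

theorem ucpc_of_locallyControlled (hδ : Tendsto δ atTop (𝓝 0))
    (hloc : ∀ n, LocallyControlled (F n) (fun y => clampNorm n (f y)) (δ n)) : UCPC F f := by
  intro y₀ hcont ε hε
  obtain ⟨r, hr, hfr⟩ := Metric.continuousAt_iff.1 hcont (ε / 4) (by positivity)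
  obtain ⟨k₀, hk₀⟩ := eventually_atTop.1 ((hδ.eventually (gt_mem_nhds (half_pos hr))).and
    (eventually_ge_atTop ⌈‖f y₀‖ + ε / 4⌉₊))
  refine ⟨k₀, ball y₀ (r / 2), ball_mem_nhds y₀ (half_pos hr), fun k hk y hy => ?_⟩
  obtain ⟨hδk, hk⟩ := hk₀ k hk
  have hclose : ∀ p, dist p y < δ k → ‖clampNorm k (f p) - f y₀‖ ≤ ε / 4 := fun p hp => by
    have hp : ‖f p - f y₀‖ < ε / 4 := by
      rw [← dist_eq_norm]
      exact hfr (by linarith [dist_triangle p y y₀, mem_ball.1 hy])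
    have hfp : ‖f p‖ ≤ k := by
      linarith [norm_le_insert' (f p) (f y₀), Nat.le_ceil (‖f y₀‖ + ε / 4),
        (Nat.cast_le (α := ℝ)).2 hk]
    rw [clampNorm_of_norm_le hfp]
    exact hp.le
  linarith [hloc k y (f y₀) (ε / 4) hclose]

theorem exists_norm_le_on_eball_of_locallyControlled (hδ : Tendsto δ atTop (𝓝 0))
    (hloc : ∀ n, LocallyControlled (F n) (fun y => clampNorm n (f y)) (δ n))
    {a : Y} {r : ℝ≥0∞} (hr : 0 < r) {M : ℝ} (hM : ∀ y ∈ eball a (2 * r), ‖f y‖ ≤ M) :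
    ∃ M', ∀ n, ∀ y ∈ eball a r, ‖F n y‖ ≤ M' := by
  have hδr : ∀ᶠ n in atTop, ENNReal.ofReal (δ n) < r := by
    have := ENNReal.tendsto_ofReal hδ
    rw [ENNReal.ofReal_zero] at this
    exact this.eventually (gt_mem_nhds hr)
  obtain ⟨N, hN⟩ := eventually_atTop.1 hδr
  refine ⟨max (3 * M) (3 * N), fun n y hy => ?_⟩
  rcases lt_or_ge n N with hn | hn
  · exact (norm_le_of_locallyControlled hloc n y).trans (le_max_of_le_right (by gcongr))
  · have hball : ∀ p, dist p y < δ n → ‖clampNorm n (f p) - 0‖ ≤ M := fun p hp => by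
      rw [sub_zero]
      refine (norm_clampNorm_le_norm _ _).trans (hM p (mem_eball.2 ?_))
      calc edist p a ≤ edist p y + edist y a := edist_triangle _ _ _
        _ < r + r := ENNReal.add_lt_add ((edist_lt_ofReal.2 hp).trans (hN n hn)) hy
        _ = 2 * r := (two_mul r).symm
    exact le_max_of_le_left (by simpa using hloc n y 0 M hball)

end Sequences

/-- A vector-valued Baire one function is a pointwise limit of a sequence of
bounded locally Lipschitz functions with UCPC which is moreover uniformly
bounded on balls on whose doubles `f` is bounded. -/
theorem baire_one_approx_locallyLipschitz_UCPC_unifBounded {Y Z : Type*}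
    [MetricSpace Y] [NormedAddCommGroup Z] [NormedSpace ℝ Z]
    (f : Y → Z) (hf : IsBaireOne f) :
    ∃ F : ℕ → Y → Z,
      (∀ n, ∃ M : ℝ, ∀ y, ‖F n y‖ ≤ M) ∧
      (∀ n, LocallyLipschitz (F n)) ∧
      (∀ y, Tendsto (fun n => F n y) atTop (nhds (f y))) ∧
      UCPC F f ∧
      (∀ a : Y, ∀ r : ℝ≥0∞, 0 < r →
        (∃ M : ℝ, ∀ y ∈ EMetric.ball a (2 * r), ‖f y‖ ≤ M) →
        ∃ M : ℝ, ∀ n, ∀ y ∈ EMetric.ball a r, ‖F n y‖ ≤ M) := by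
  obtain ⟨u, hu_cont, hu_lim⟩ := hf
  have hδ : Tendsto (fun n : ℕ => 2 * (1 / ((n : ℝ) + 1))) atTop (𝓝 0) := by
    simpa only [mul_zero] using tendsto_one_div_add_atTop_nhds_zero_nat.const_mul (2 : ℝ)
  have hbdd (n : ℕ) : Bornology.IsBounded (range fun y => clampNorm n (f y)) :=
    isBounded_iff_forall_norm_le.2 ⟨_, forall_mem_range.2 fun y => norm_clampNorm_le _ _⟩
  choose F hF_lip hF_near hF_loc using fun n : ℕ =>
    exists_locallyLipschitz_approx (hbdd n) (hu_cont n) (Nat.one_div_pos_of_nat (n := n))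
  exact ⟨F, fun n => ⟨_, norm_le_of_locallyControlled hF_loc n⟩, hF_lip,
    tendsto_of_norm_sub_clampNorm_le hδ hu_lim hF_near, ucpc_of_locallyControlled hδ hF_loc,
    fun a r hr ⟨M, hM⟩ => exists_norm_le_on_eball_of_locallyControlled hδ hF_loc hr hM⟩
end

section
/- Let Y be a metric space and Z a normed linear space. Given a function f : Y → Z and a sequence of continuous functions h_n : Y → Z, there exist continuous functions h̃_n : Y → Z such that: (a) h̃_n(y) → f(y) whenever y ∈ Y and h_n(y) → f(y); (b) h̃_n(y) → f(y) whenever y ∈ Y and f is continuous at y; and (c) the pair ({h̃_n}, f) has UCPC. -/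
/-!
Averaging `f` with a partition of unity at scale `1/(n+1)` gives continuous `gₙ` with
`gₙ y ∈ convexHull (f '' ball y (1/(n+1)))`, so `gₙ → f` locally uniformly at continuity points
of `f`. Take `h̃ₙ = gₙ + clamp cₙ (hₙ - gₙ)`, i.e. `hₙ` pulled into the ball of radius `cₙ` around
`gₙ`. The continuous radius `cₙ` tends to `0` locally uniformly at continuity points of `f`, which
gives UCPC. At a discontinuity point `y` where `hₙ y → f y`, `cₙ y ≥ ‖hₙ y - gₙ y‖` eventually:
the constraint `cₙ y ≤ 2/(m+1)` only applies at the finitely many scales `m` at which `f`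
oscillates by less than `1/(m+1)` near `y`, and there `‖hₙ y - gₙ y‖ < 2/(m+1)` eventually.
Hence `h̃ₙ y = hₙ y` eventually.
-/

open Filter Topology

open Metric Set Function

section Clamp

variable {E : Type*} [NormedAddCommGroup E] [NormedSpace ℝ E]

noncomputable def clamp (c : ℝ) (v : E) : E := (c / max c ‖v‖) • v

theorem clamp_of_norm_le {c : ℝ} {v : E} (hc : 0 < c) (hv : ‖v‖ ≤ c) : clamp c v = v := by
  rw [clamp, max_eq_left hv, div_self hc.ne', one_smul]

theorem norm_clamp_le {c : ℝ} (hc : 0 < c) (v : E) : ‖clamp c v‖ ≤ c := by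
  have hmax : 0 < max c ‖v‖ := lt_max_of_lt_left hc
  rw [clamp, norm_smul, Real.norm_of_nonneg (by positivity)]
  calc c / max c ‖v‖ * ‖v‖ ≤ c / max c ‖v‖ * max c ‖v‖ := by gcongr; exact le_max_right _ _
    _ = c := div_mul_cancel₀ c hmax.ne'

theorem Continuous.clamp {X : Type*} [TopologicalSpace X] {c : X → ℝ} {v : X → E}
    (hc : Continuous c) (hv : Continuous v) (hpos : ∀ x, 0 < c x) :
    Continuous fun x => clamp (c x) (v x) :=
  (hc.div (hc.max hv.norm) fun x => (lt_max_of_lt_left (hpos x)).ne').smul hv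

end Clamp

section UCPC

variable {Y Z : Type*} [TopologicalSpace Y] [NormedAddCommGroup Z] {h : ℕ → Y → Z} {f : Y → Z}

theorem ucpc_iff_tendsto_uncurry : UCPC h f ↔
    ∀ y₀, ContinuousAt f y₀ → Tendsto (uncurry h) (atTop ×ˢ 𝓝 y₀) (𝓝 (f y₀)) := by
  refine forall₂_congr fun y₀ _ => ?_
  rw [(atTop_basis.prod (𝓝 y₀).basis_sets).tendsto_iff Metric.nhds_basis_ball]
  simp [dist_eq_norm, imp_forall_iff]

theorem UCPC.tendsto (hh : UCPC h f) {y : Y} (hf : ContinuousAt f y) :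
    Tendsto (h · y) atTop (𝓝 (f y)) :=
  (ucpc_iff_tendsto_uncurry.1 hh y hf).comp (tendsto_id.prodMk tendsto_const_nhds)

theorem ucpc_add_clamp [NormedSpace ℝ Z] {g w : ℕ → Y → Z} {c : ℕ → Y → ℝ}
    (hc_pos : ∀ n y, 0 < c n y)
    (hg : ∀ y₀, ContinuousAt f y₀ → Tendsto (uncurry g) (atTop ×ˢ 𝓝 y₀) (𝓝 (f y₀)))
    (hc : ∀ y₀, ContinuousAt f y₀ → Tendsto (uncurry c) (atTop ×ˢ 𝓝 y₀) (𝓝 0)) :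
    UCPC (fun n y => g n y + clamp (c n y) (w n y)) f := by
  refine ucpc_iff_tendsto_uncurry.2 fun y₀ hy₀ => ?_
  have hclamp : Tendsto (fun p : ℕ × Y => clamp (c p.1 p.2) (w p.1 p.2)) (atTop ×ˢ 𝓝 y₀) (𝓝 0) :=
    squeeze_zero_norm (fun p => norm_clamp_le (hc_pos p.1 p.2) _) (hc y₀ hy₀)
  have := (hg y₀ hy₀).add hclamp
  rwa [add_zero] at this

end UCPC

section Oscillation

variable {Y Z : Type*} [PseudoMetricSpace Y] [PseudoMetricSpace Z] {f : Y → Z} {ε ε' : ℝ} {y : Y}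

def smallOscillationSet (f : Y → Z) (ε : ℝ) : Set Y :=
  {y | ∃ r > 0, ∀ a ∈ ball y r, ∀ b ∈ ball y r, dist (f a) (f b) < ε}

theorem isOpen_smallOscillationSet (f : Y → Z) (ε : ℝ) : IsOpen (smallOscillationSet f ε) := by
  refine Metric.isOpen_iff.2 fun y ⟨r, hr, hy⟩ => ⟨r / 2, half_pos hr, fun x hx => ?_⟩
  have hsub : ball x (r / 2) ⊆ ball y r := ball_subset_ball' (by linarith [mem_ball.1 hx])
  exact ⟨r / 2, half_pos hr, fun a ha b hb => hy a (hsub ha) b (hsub hb)⟩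

theorem smallOscillationSet_mono (h : ε ≤ ε') :
    smallOscillationSet f ε ⊆ smallOscillationSet f ε' :=
  fun _ ⟨r, hr, hy⟩ => ⟨r, hr, fun a ha b hb => (hy a ha b hb).trans_le h⟩

theorem preimage_ball_mem_nhds_of_mem_smallOscillationSet (hy : y ∈ smallOscillationSet f ε) :
    f ⁻¹' ball (f y) ε ∈ 𝓝 y := by
  obtain ⟨r, hr, hy⟩ := hy
  exact mem_of_superset (ball_mem_nhds y hr) fun a ha => hy a ha y (mem_ball_self hr)

theorem continuousAt_iff_forall_mem_smallOscillationSet :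
    ContinuousAt f y ↔ ∀ ε > 0, y ∈ smallOscillationSet f ε := by
  refine ⟨fun hf ε hε => ?_, fun h => Metric.continuousAt_iff'.2 fun ε hε =>
    preimage_ball_mem_nhds_of_mem_smallOscillationSet (h ε hε)⟩
  obtain ⟨r, hr, hfr⟩ := Metric.continuousAt_iff.1 hf (ε / 2) (half_pos hε)
  refine ⟨r, hr, fun a ha b hb => ?_⟩
  calc dist (f a) (f b) ≤ dist (f a) (f y) + dist (f b) (f y) := dist_triangle_right _ _ _
    _ < ε / 2 + ε / 2 := add_lt_add (hfr ha) (hfr hb)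
    _ = ε := add_halves ε

end Oscillation

section Smoothing

variable {Y E : Type*} [PseudoMetricSpace Y] [NormedAddCommGroup E] [NormedSpace ℝ E]

theorem exists_continuous_mem_convexHull_image_ball (f : Y → E) {δ : ℝ} (hδ : 0 < δ) :
    ∃ g : Y → E, Continuous g ∧ ∀ y, g y ∈ convexHull ℝ (f '' ball y δ) := by
  obtain ⟨g, hg⟩ := exists_continuous_forall_mem_convex_of_local_const
    (fun y => convex_convexHull ℝ (f '' ball y δ)) fun y =>
      ⟨f y, eventually_of_mem (ball_mem_nhds y hδ) fun y' hy' =>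
        subset_convexHull ℝ _ (mem_image_of_mem f (mem_ball_comm.1 hy'))⟩
  exact ⟨g, g.continuous, hg⟩

variable {ι : Type*} {l : Filter ι} {δ : ι → ℝ}

theorem eventually_ball_subset_of_mem_nhds (hδ : Tendsto δ l (𝓝 0)) {s : Set Y} {y₀ : Y}
    (hs : s ∈ 𝓝 y₀) : ∀ᶠ p in l ×ˢ 𝓝 y₀, ball p.2 (δ p.1) ⊆ s := by
  obtain ⟨r, hr, hrs⟩ := Metric.mem_nhds_iff.1 hs
  filter_upwards [(hδ.eventually (gt_mem_nhds (half_pos hr))).prod_mk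
    (ball_mem_nhds y₀ (half_pos hr))] with p ⟨hδr, hp⟩
  exact (ball_subset_ball' (by linarith [mem_ball.1 hp])).trans hrs

variable {f : Y → E} {g : ι → Y → E}

theorem eventually_mem_of_mem_convexHull_image_ball (hδ : Tendsto δ l (𝓝 0))
    (hg : ∀ i y, g i y ∈ convexHull ℝ (f '' ball y (δ i))) {s : Set E} (hs : Convex ℝ s)
    {y₀ : Y} (hfs : f ⁻¹' s ∈ 𝓝 y₀) : ∀ᶠ p in l ×ˢ 𝓝 y₀, g p.1 p.2 ∈ s :=
  (eventually_ball_subset_of_mem_nhds hδ hfs).mono fun p hp =>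
    convexHull_min (image_subset_iff.2 hp) hs (hg p.1 p.2)

theorem tendsto_uncurry_of_mem_convexHull_image_ball (hδ : Tendsto δ l (𝓝 0))
    (hg : ∀ i y, g i y ∈ convexHull ℝ (f '' ball y (δ i))) {y₀ : Y} (hf : ContinuousAt f y₀) :
    Tendsto (uncurry g) (l ×ˢ 𝓝 y₀) (𝓝 (f y₀)) :=
  Metric.tendsto_nhds.2 fun ε hε =>
    eventually_mem_of_mem_convexHull_image_ball hδ hg (convex_ball _ ε) (hf (ball_mem_nhds _ hε))

theorem eventually_dist_lt_of_mem_smallOscillationSet (hδ : Tendsto δ l (𝓝 0))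
    (hg : ∀ i y, g i y ∈ convexHull ℝ (f '' ball y (δ i))) {ε : ℝ} {y : Y}
    (hy : y ∈ smallOscillationSet f ε) : ∀ᶠ i in l, dist (g i y) (f y) < ε :=
  (eventually_mem_of_mem_convexHull_image_ball hδ hg (convex_ball _ ε)
    (preimage_ball_mem_nhds_of_mem_smallOscillationSet hy)).curry.mono fun _ hi => hi.self_of_nhds

end Smoothing

section ClampRadius

variable {Y Z : Type*} [PseudoMetricSpace Y] [PseudoMetricSpace Z]

/-- The `m`-th term is `2 / (m + 1)` at points whose `1 / (n + 1)`-ball lies in the set where `f`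
oscillates by less than `1 / (m + 1)`, and it is at least `v n` off that set. -/
noncomputable def clampRadius (f : Y → Z) (v : ℕ → Y → ℝ) (n : ℕ) (y : Y) : ℝ :=
  (Finset.range (n + 1)).inf' Finset.nonempty_range_add_one fun m =>
    2 * (1 / ((m : ℝ) + 1)) + v n y * thickenedIndicator (Nat.one_div_pos_of_nat (n := n))
      (smallOscillationSet f (1 / ((m : ℝ) + 1)))ᶜ y

variable {f : Y → Z} {v : ℕ → Y → ℝ} {n : ℕ} {y : Y}

theorem continuous_clampRadius (hv : Continuous (v n)) : Continuous (clampRadius f v n) :=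
  Continuous.finset_inf'_apply _ fun _ _ =>
    continuous_const.add (hv.mul (NNReal.continuous_coe.comp (thickenedIndicator _ _).continuous))

theorem clampRadius_pos (hv : 0 ≤ v n y) : 0 < clampRadius f v n y :=
  (Finset.lt_inf'_iff _).2 fun _ _ => by positivity

theorem clampRadius_le {m : ℕ} (hmn : m ≤ n)
    (hy : ball y (1 / ((n : ℝ) + 1)) ⊆ smallOscillationSet f (1 / ((m : ℝ) + 1))) :
    clampRadius f v n y ≤ 2 * (1 / ((m : ℝ) + 1)) := by
  refine (Finset.inf'_le _ (Finset.mem_range_succ_iff.2 hmn)).trans_eq ?_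
  rw [thickenedIndicator_zero, NNReal.coe_zero, mul_zero, add_zero]
  rintro hmem
  obtain ⟨z, hz, hzy⟩ := mem_thickening_iff.1 hmem
  exact hz (hy (mem_ball'.2 hzy))

theorem le_clampRadius (hv : 0 ≤ v n y)
    (h : ∀ m ≤ n, y ∈ smallOscillationSet f (1 / ((m : ℝ) + 1)) →
      v n y ≤ 2 * (1 / ((m : ℝ) + 1))) :
    v n y ≤ clampRadius f v n y := by
  refine Finset.le_inf' _ _ fun m hm => ?_
  by_cases hy : y ∈ smallOscillationSet f (1 / ((m : ℝ) + 1))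
  · exact (h m (Finset.mem_range_succ_iff.1 hm) hy).trans (le_add_of_nonneg_right (by positivity))
  · rw [thickenedIndicator_one _ _ hy, NNReal.coe_one, mul_one]
    exact le_add_of_nonneg_left (by positivity)

theorem tendsto_uncurry_clampRadius {y₀ : Y} (hf : ContinuousAt f y₀) (hv : ∀ n y, 0 ≤ v n y) :
    Tendsto (uncurry (clampRadius f v)) (atTop ×ˢ 𝓝 y₀) (𝓝 0) := by
  refine tendsto_order.2 ⟨fun a ha => .of_forall fun p => ha.trans (clampRadius_pos (hv _ _)),
    fun ε hε => ?_⟩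
  obtain ⟨m, hm⟩ := exists_nat_one_div_lt (half_pos hε)
  have hU : smallOscillationSet f (1 / ((m : ℝ) + 1)) ∈ 𝓝 y₀ :=
    (isOpen_smallOscillationSet _ _).mem_nhds
      (continuousAt_iff_forall_mem_smallOscillationSet.1 hf _ Nat.one_div_pos_of_nat)
  filter_upwards [eventually_ball_subset_of_mem_nhds tendsto_one_div_add_atTop_nhds_zero_nat hU,
    (eventually_ge_atTop m).prod_inl (𝓝 y₀)] with p hp hpm
  calc uncurry (clampRadius f v) p ≤ 2 * (1 / ((m : ℝ) + 1)) := clampRadius_le hpm hp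
    _ < ε := by linarith

theorem eventually_le_clampRadius (hf : ¬ContinuousAt f y) (hv : ∀ n, 0 ≤ v n y)
    (h : ∀ ε > 0, y ∈ smallOscillationSet f ε → ∀ᶠ n in atTop, v n y ≤ 2 * ε) :
    ∀ᶠ n in atTop, v n y ≤ clampRadius f v n y := by
  obtain ⟨ε, hε, hy⟩ : ∃ ε > 0, y ∉ smallOscillationSet f ε := by
    simpa [continuousAt_iff_forall_mem_smallOscillationSet] using hf
  obtain ⟨m₀, hm₀⟩ := exists_nat_one_div_lt hε
  have hsmall : ∀ᶠ n in atTop, ∀ m ∈ Finset.range m₀,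
      y ∈ smallOscillationSet f (1 / ((m : ℝ) + 1)) → v n y ≤ 2 * (1 / ((m : ℝ) + 1)) := by
    refine (eventually_all_finset _).2 fun m _ => ?_
    by_cases hm : y ∈ smallOscillationSet f (1 / ((m : ℝ) + 1))
    · exact (h _ Nat.one_div_pos_of_nat hm).mono fun n hn _ => hn
    · exact .of_forall fun n hn => (hm hn).elim
  filter_upwards [hsmall] with n hn
  refine le_clampRadius (hv n) fun m _ hym => hn m (Finset.mem_range.2 ?_) hym
  by_contra! hm
  exact hy (smallOscillationSet_mono ((Nat.one_div_le_one_div hm).trans hm₀.le) hym)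

end ClampRadius

/-- Given a function `f` and a sequence of continuous functions `h n`, there is
a sequence of continuous functions `h̃ n` converging to `f` wherever `h n` does
and wherever `f` is continuous, such that `({h̃ n}, f)` has UCPC. -/
theorem exists_continuous_seq_UCPC {Y Z : Type*}
    [MetricSpace Y] [NormedAddCommGroup Z] [NormedSpace ℝ Z]
    (f : Y → Z) (h : ℕ → Y → Z) (hcont : ∀ n, Continuous (h n)) :
    ∃ h' : ℕ → Y → Z,
      (∀ n, Continuous (h' n)) ∧
      (∀ y, Tendsto (fun n => h n y) atTop (nhds (f y)) →
        Tendsto (fun n => h' n y) atTop (nhds (f y))) ∧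
      (∀ y, ContinuousAt f y → Tendsto (fun n => h' n y) atTop (nhds (f y))) ∧
      UCPC h' f := by
  choose g hg_cont hg_mem using fun n : ℕ =>
    exists_continuous_mem_convexHull_image_ball f (Nat.one_div_pos_of_nat (n := n))
  have hδ := tendsto_one_div_add_atTop_nhds_zero_nat (𝕜 := ℝ)
  set v : ℕ → Y → ℝ := fun n y => ‖h n y - g n y‖
  have hc_pos : ∀ n y, 0 < clampRadius f v n y := fun n y => clampRadius_pos (norm_nonneg _)
  set h' : ℕ → Y → Z := fun n y => g n y + clamp (clampRadius f v n y) (h n y - g n y)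
  have ucpc : UCPC h' f := ucpc_add_clamp hc_pos
    (fun _ hy₀ => tendsto_uncurry_of_mem_convexHull_image_ball hδ hg_mem hy₀)
    (fun _ hy₀ => tendsto_uncurry_clampRadius hy₀ fun _ _ => norm_nonneg _)
  have h'_cont : ∀ n, Continuous (h' n) := fun n =>
    (hg_cont n).add ((continuous_clampRadius ((hcont n).sub (hg_cont n)).norm).clamp
      ((hcont n).sub (hg_cont n)) (hc_pos n))
  refine ⟨h', h'_cont, fun y hy => ?_, fun y hy => ucpc.tendsto hy, ucpc⟩
  by_cases hf : ContinuousAt f y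
  · exact ucpc.tendsto hf
  have hclose : ∀ ε > 0, y ∈ smallOscillationSet f ε → ∀ᶠ n in atTop, v n y ≤ 2 * ε :=
    fun ε hε hyε => by
      filter_upwards [Metric.tendsto_nhds.1 hy ε hε,
        eventually_dist_lt_of_mem_smallOscillationSet hδ hg_mem hyε] with n hh hg
      linarith [dist_triangle_right (h n y) (g n y) (f y), dist_eq_norm (h n y) (g n y)]
  refine hy.congr' ?_
  filter_upwards [eventually_le_clampRadius (v := v) hf (fun n => norm_nonneg _) hclose] with n hn
  change h n y = g n y + clamp (clampRadius f v n y) (h n y - g n y)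
  rw [clamp_of_norm_le (hc_pos n y) hn, add_sub_cancel]
end

section
/- Let Y be a metric space and Z a normed linear space. Given a function f : Y → Z and a sequence of continuous functions h_n : Y → Z, there exist continuous functions h̃_n : Y → Z such that h̃_n(y) → f(y) whenever y ∈ Y and h_n(y) → f(y), and also h̃_n(y) → f(y) whenever y ∈ Y and f is continuous at y. -/
/-!
For each `n`, replace `h n` by a continuous selection `h' n` of the convex sets
`closedBall (f y) (3 ‖h n y - f y‖) ∩ closedEBall (f y) (3 ediam (f '' ball y (1 / (n + 1))))`,
glued from local selections by a partition of unity. Near `x`, with `s` the diameter of `f` on a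
small ball around `x`, the local selection moves from `f x` towards `h n y` by at most `2 s`: it
returns `h n y` itself when that is close to `f y`, and otherwise stays within `3 s` of `f y`.
The first bound gives `h' n y → f y` wherever `h n y → f y`; the second does so wherever `f` has
zero oscillation, i.e. at the continuity points of `f`.
-/

open Filter Topology Metric Set

section RadialClamp

variable {E : Type*} [NormedAddCommGroup E] [NormedSpace ℝ E]

noncomputable def radialClamp (r : ℝ) (v : E) : E := min 1 (r / ‖v‖) • v

theorem radialClamp_of_norm_le {r : ℝ} {v : E} (hv : ‖v‖ ≤ r) : radialClamp r v = v := by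
  rcases (norm_nonneg v).eq_or_lt with hv0 | hv0
  · rw [eq_comm, norm_eq_zero] at hv0
    rw [radialClamp, hv0, smul_zero]
  · rw [radialClamp, min_eq_left ((one_le_div hv0).2 hv), one_smul]

theorem norm_radialClamp_le {r : ℝ} (hr : 0 ≤ r) (v : E) : ‖radialClamp r v‖ ≤ r := by
  have hc : 0 ≤ min 1 (r / ‖v‖) := le_min zero_le_one (by positivity)
  rw [radialClamp, norm_smul, Real.norm_of_nonneg hc]
  rcases (norm_nonneg v).eq_or_lt with hv0 | hv0
  · rw [← hv0, mul_zero]; exact hr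
  · calc min 1 (r / ‖v‖) * ‖v‖ ≤ r / ‖v‖ * ‖v‖ := by gcongr; exact min_le_right _ _
      _ = r := div_mul_cancel₀ r hv0.ne'

theorem continuous_radialClamp {r : ℝ} (hr : 0 ≤ r) : Continuous (radialClamp r : E → E) := by
  rcases hr.eq_or_lt with rfl | hr_pos
  · have hzero : radialClamp (0 : ℝ) = fun _ : E => (0 : E) := funext fun v => by simp [radialClamp]
    exact hzero ▸ continuous_const
  rw [continuous_iff_continuousAt]
  intro v
  rcases lt_or_ge ‖v‖ r with hv | hv
  · have hev : radialClamp r =ᶠ[𝓝 v] id := by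
      filter_upwards [(isOpen_lt continuous_norm continuous_const).mem_nhds hv] with w hw
      exact radialClamp_of_norm_le hw.le
    exact continuousAt_id.congr hev.symm
  · have hv0 : ‖v‖ ≠ 0 := (hr_pos.trans_le hv).ne'
    exact (continuousAt_const.min (continuousAt_const.div continuous_norm.continuousAt hv0)).smul
      continuousAt_id

theorem norm_add_radialClamp_sub_le {a b v : E} {s : ℝ} (hab : ‖a - b‖ ≤ s) :
    ‖a + radialClamp (2 * s) (v - a) - b‖ ≤ 3 * ‖v - b‖ ∧
      ‖a + radialClamp (2 * s) (v - a) - b‖ ≤ 3 * s := by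
  have hs : 0 ≤ s := (norm_nonneg _).trans hab
  by_cases hva : ‖v - a‖ ≤ 2 * s
  · have hvb : ‖v - b‖ ≤ 3 * s := by
      calc ‖v - b‖ ≤ ‖v - a‖ + ‖a - b‖ := norm_sub_le_norm_sub_add_norm_sub _ _ _
        _ ≤ 3 * s := by linarith
    rw [radialClamp_of_norm_le hva, add_sub_cancel]
    constructor <;> linarith [norm_nonneg (v - b)]
  · have hvb : s ≤ ‖v - b‖ := by
      have := norm_sub_le_norm_sub_add_norm_sub v b a
      rw [norm_sub_rev b a] at this
      linarith
    have hle : ‖a + radialClamp (2 * s) (v - a) - b‖ ≤ 3 * s :=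
      calc ‖a + radialClamp (2 * s) (v - a) - b‖
          = ‖(a - b) + radialClamp (2 * s) (v - a)‖ := by rw [add_sub_right_comm]
        _ ≤ ‖a - b‖ + ‖radialClamp (2 * s) (v - a)‖ := norm_add_le _ _
        _ ≤ s + 2 * s := add_le_add hab (norm_radialClamp_le (by positivity) _)
        _ = 3 * s := by ring
    exact ⟨hle.trans (by linarith), hle⟩

end RadialClamp

theorem ContinuousAt.tendsto_ediam_image_ball {X F : Type*} [PseudoMetricSpace X]
    [PseudoEMetricSpace F] {f : X → F} {y : X} (hf : ContinuousAt f y) :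
    Tendsto (fun r => ediam (f '' ball y r)) (𝓝 0) (𝓝 0) := by
  refine ENNReal.tendsto_nhds_zero.2 fun ε hε => ?_
  have hosc : oscillation f y < ε := hf.oscillation_eq_zero ▸ hε
  obtain ⟨S, hS, hSε⟩ : ∃ S ∈ (𝓝 y).map f, ediam S < ε := by
    simpa only [oscillation, iInf_lt_iff, exists_prop] using hosc
  obtain ⟨δ, hδ, hδS⟩ := Metric.mem_nhds_iff.1 hS
  filter_upwards [eventually_lt_nhds hδ] with r hr
  exact (ediam_mono (image_subset_iff.2 ((ball_subset_ball hr.le).trans hδS))).trans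
    hSε.le

theorem exists_continuous_norm_sub_le_and_edist_le_ediam_image_ball {Y Z : Type*} [MetricSpace Y]
    [NormedAddCommGroup Z] [NormedSpace ℝ Z] (f g : Y → Z) (hg : Continuous g) {r : ℝ}
    (hr : 0 < r) :
    ∃ g' : C(Y, Z), ∀ y, ‖g' y - f y‖ ≤ 3 * ‖g y - f y‖ ∧
      edist (g' y) (f y) ≤ 3 * ediam (f '' ball y r) := by
  set t : Y → Set Z := fun y =>
    closedBall (f y) (3 * ‖g y - f y‖) ∩ closedEBall (f y) (3 * ediam (f '' ball y r))
  have hlocal : ∀ x, ∃ U ∈ 𝓝 x, ∃ g' : Y → Z, ContinuousOn g' U ∧ ∀ y ∈ U, g' y ∈ t y := by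
    intro x
    refine ⟨ball x (r / 2), ball_mem_nhds x (half_pos hr), ?_⟩
    have hsub : ∀ y ∈ ball x (r / 2), f '' ball x (r / 2) ⊆ f '' ball y r := fun y hy =>
      image_mono fun z hz => by
        rw [mem_ball] at *
        linarith [dist_triangle z x y, dist_comm x y]
    by_cases hD : ediam (f '' ball x (r / 2)) = ⊤
    · refine ⟨g, hg.continuousOn, fun y hy => ⟨?_, ?_⟩⟩
      · rw [mem_closedBall, dist_eq_norm]; linarith [norm_nonneg (g y - f y)]
      · rw [mem_closedEBall, eq_top_mono (ediam_mono (hsub y hy)) hD]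
        simp
    set s := (ediam (f '' ball x (r / 2))).toReal
    refine ⟨fun y => f x + radialClamp (2 * s) (g y - f x),
      (continuous_const.add ((continuous_radialClamp (by positivity)).comp
        (hg.sub continuous_const))).continuousOn, fun y hy => ?_⟩
    have hxy : ‖f x - f y‖ ≤ s := by
      rw [← dist_eq_norm, dist_edist]
      exact ENNReal.toReal_mono hD (edist_le_ediam_of_mem
        (mem_image_of_mem f (mem_ball_self (half_pos hr))) (mem_image_of_mem f hy))
    obtain ⟨h_g, h_s⟩ := norm_add_radialClamp_sub_le (v := g y) hxy
    refine ⟨by rwa [mem_closedBall, dist_eq_norm], ?_⟩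
    rw [mem_closedEBall, edist_dist, dist_eq_norm]
    calc ENNReal.ofReal _ ≤ ENNReal.ofReal (3 * s) := ENNReal.ofReal_le_ofReal h_s
      _ = 3 * ediam (f '' ball x (r / 2)) := by
        rw [ENNReal.ofReal_mul (by norm_num), ENNReal.ofReal_toReal hD]; simp
      _ ≤ 3 * ediam (f '' ball y r) := by gcongr 3 * ?_; exact ediam_mono (hsub y hy)
  obtain ⟨g', hg'⟩ := exists_continuous_forall_mem_convex_of_local
    (fun y => (convex_closedBall _ _).inter (convex_closedEBall _ _)) hlocal
  exact ⟨g', fun y => by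
    simpa only [t, mem_inter_iff, mem_closedBall, dist_eq_norm, mem_closedEBall] using hg' y⟩

/-- Given a function `f` and a sequence of continuous functions `h n`, there is
a sequence of continuous functions `h' n` converging to `f` at every point
where `h n` converges to `f` and at every point where `f` is continuous. -/
theorem exists_continuous_seq_converging_at_continuity_points {Y Z : Type*}
    [MetricSpace Y] [NormedAddCommGroup Z] [NormedSpace ℝ Z]
    (f : Y → Z) (h : ℕ → Y → Z) (hcont : ∀ n, Continuous (h n)) :
    ∃ h' : ℕ → Y → Z,
      (∀ n, Continuous (h' n)) ∧
      (∀ y, Tendsto (fun n => h n y) atTop (nhds (f y)) →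
        Tendsto (fun n => h' n y) atTop (nhds (f y))) ∧
      (∀ y, ContinuousAt f y → Tendsto (fun n => h' n y) atTop (nhds (f y))) := by
  choose g hg using fun n : ℕ =>
    exists_continuous_norm_sub_le_and_edist_le_ediam_image_ball f (h n) (hcont n)
      (Nat.one_div_pos_of_nat (n := n))
  refine ⟨fun n => g n, fun n => (g n).continuous, fun y hy => ?_, fun y hy => ?_⟩
  · rw [tendsto_iff_norm_sub_tendsto_zero] at hy ⊢
    exact squeeze_zero (fun _ => norm_nonneg _) (fun n => (hg n y).1)
      (by simpa using hy.const_mul 3)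
  · have hdiam := hy.tendsto_ediam_image_ball.comp tendsto_one_div_add_atTop_nhds_zero_nat
    rw [tendsto_iff_edist_tendsto_0]
    exact tendsto_of_tendsto_of_tendsto_of_le_of_le tendsto_const_nhds
      (by simpa using ENNReal.Tendsto.const_mul hdiam (Or.inr ENNReal.ofNat_ne_top))
      (fun _ => zero_le) (fun n => (hg n y).2)
end

section
/- Let Y be a metric space and let (O_n)_{n∈ℕ} be a sequence of open subsets of Y. For n ∈ ℕ define φ_n : Y → (0,∞] by φ_n(x) = (n+1) + 1/dist(x, Y \ O_n) if x ∈ O_n and φ_n(x) = ∞ if x ∈ Y \ O_n, and define r : Y → (0,∞] by r(x) = inf{φ_n(x) : n ∈ ℕ}. Then r is continuous as a function into the extended reals (0,∞] (equivalently, into [0,∞] with its standard topology). -/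
/-!
Off `O n` the distance to `(O n)ᶜ` vanishes, so `φ n` is everywhere `(n + 1) + 1 / dist(·, (O n)ᶜ)`,
a continuous function. An infimum of continuous functions is upper semicontinuous. Since `φ n ≥ n`,
below any finite level only finitely many `φ n` matter near a point, and a finite infimum of
continuous functions is continuous; this gives lower semicontinuity.
-/

open Filter Topology ENNReal Classical

theorem ENNReal.lowerSemicontinuous_iInf_of_natCast_le {X : Type*} [TopologicalSpace X]
    {f : ℕ → X → ℝ≥0∞} (hf : ∀ n, Continuous (f n)) (hle : ∀ (n : ℕ) x, (n : ℝ≥0∞) ≤ f n x) :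
    LowerSemicontinuous fun x => ⨅ n, f n x := by
  intro x t ht
  obtain ⟨t', htt', ht'⟩ := exists_between ht
  obtain ⟨N, hN⟩ := ENNReal.exists_nat_gt ht'.ne_top
  have hnear : ∀ᶠ y in 𝓝 x, ∀ n ∈ Finset.range N, t' < f n y :=
    (eventually_all_finset _).2 fun n _ =>
      (hf n).continuousAt.eventually_const_lt (ht'.trans_le (iInf_le _ n))
  filter_upwards [hnear] with y hy
  refine htt'.trans_le (le_iInf fun n => ?_)
  rcases lt_or_ge n N with hn | hn
  · exact (hy n (Finset.mem_range.2 hn)).le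
  · exact hN.le.trans ((Nat.cast_le.2 hn).trans (hle n y))

theorem ENNReal.continuous_iInf_of_natCast_le {X : Type*} [TopologicalSpace X]
    {f : ℕ → X → ℝ≥0∞} (hf : ∀ n, Continuous (f n)) (hle : ∀ (n : ℕ) x, (n : ℝ≥0∞) ≤ f n x) :
    Continuous fun x => ⨅ n, f n x :=
  continuous_iff_lower_upperSemicontinuous.2
    ⟨lowerSemicontinuous_iInf_of_natCast_le hf hle,
      upperSemicontinuous_iInf fun n => (hf n).upperSemicontinuous⟩

theorem continuous_inf_of_penalty_functions_general {Y : Type*} [MetricSpace Y]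
    (O : ℕ → Set Y)
    (φ : ℕ → Y → ℝ≥0∞)
    (hφ : ∀ n x, φ n x =
      if x ∈ O n then ((n : ℝ≥0∞) + 1) + (EMetric.infEdist x (O n)ᶜ)⁻¹ else ⊤)
    (r : Y → ℝ≥0∞) (hr : ∀ x, r x = ⨅ n, φ n x) :
    Continuous r := by
  have hφ_eq : ∀ n, φ n = fun x => ((n : ℝ≥0∞) + 1) + (Metric.infEDist x (O n)ᶜ)⁻¹ := by
    refine fun n => funext fun x => ?_
    rw [hφ]
    split_ifs with hx
    · rfl
    · rw [Metric.infEDist_zero_of_mem (Set.mem_compl hx), inv_zero, add_top]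
  rw [funext hr]
  refine ENNReal.continuous_iInf_of_natCast_le (fun n => ?_) fun (n : ℕ) x => ?_
  · rw [hφ_eq n]
    exact continuous_const.add Metric.continuous_infEDist.inv
  · rw [hφ_eq n]
    exact le_self_add.trans le_self_add

/-- Given open sets `O n` in a metric space, the function
`r x = ⨅ n, φ n x`, where `φ n x = (n+1) + 1/dist(x, (O n)ᶜ)` on `O n` and
`φ n x = ∞` off `O n`, is continuous as a map into `[0,∞]`. -/
theorem continuous_inf_of_penalty_functions {Y : Type*} [MetricSpace Y]
    (O : ℕ → Set Y) (hO : ∀ n, IsOpen (O n))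
    (φ : ℕ → Y → ℝ≥0∞)
    (hφ : ∀ n x, φ n x =
      if x ∈ O n then ((n : ℝ≥0∞) + 1) + (EMetric.infEdist x (O n)ᶜ)⁻¹ else ⊤)
    (r : Y → ℝ≥0∞) (hr : ∀ x, r x = ⨅ n, φ n x) :
    Continuous r :=
  continuous_inf_of_penalty_functions_general O φ hφ r hr
end

section
/- Let (X,d) be a metric space, H ⊂ X a nonempty closed set, x' ∈ X \ H, a ∈ H with a ≠ x', and let x ∈ X satisfy d(x,x') < dist(x',H)/3. Then x ∉ H, and (1/4) · dist(x,H)/d(x,a) ≤ dist(x',H)/d(x',a) ≤ 4 · dist(x,H)/d(x,a). -/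
/-! Both `infDist · H` and `dist · a` are 1-Lipschitz, and `infDist x' H ≤ dist x' a` since
`a ∈ H`. Moving from `x'` to `x` by less than a third of `infDist x' H` therefore changes
numerator and denominator of the quotient by less than a third of themselves, so the quotient
changes by at most a factor `(4/3) / (2/3) = 2`. -/

open Metric

section NearbyQuotients

variable {p q p' q' δ : ℝ}

theorem div_le_two_mul_div_of_abs_sub_le (hpq : p' ≤ q') (hδ : 3 * δ < p')
    (hp : |p - p'| ≤ δ) (hq : |q - q'| ≤ δ) : p / q ≤ 2 * (p' / q') := by
  obtain ⟨hp_le, -⟩ := abs_sub_le_iff.1 hp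
  obtain ⟨-, hq_ge⟩ := abs_sub_le_iff.1 hq
  have hδ0 : 0 ≤ δ := (abs_nonneg _).trans hp
  have hq' : 0 < q' := by linarith
  calc p / q ≤ (p' + δ) / (q' - δ) := by
        gcongr <;> linarith
    _ ≤ 2 * (p' / q') := by
        rw [mul_div_assoc', div_le_div_iff₀ (by linarith) hq']
        nlinarith

theorem div_le_two_mul_div_of_abs_sub_le' (hpq : p' ≤ q') (hδ : 3 * δ < p')
    (hp : |p - p'| ≤ δ) (hq : |q - q'| ≤ δ) : p' / q' ≤ 2 * (p / q) := by
  obtain ⟨-, hp_ge⟩ := abs_sub_le_iff.1 hp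
  obtain ⟨hq_le, hq_ge⟩ := abs_sub_le_iff.1 hq
  have hδ0 : 0 ≤ δ := (abs_nonneg _).trans hp
  have hq' : 0 < q' := by linarith
  calc p' / q' ≤ 2 * ((p' - δ) / (q' + δ)) := by
        rw [mul_div_assoc', div_le_div_iff₀ hq' (by linarith)]
        nlinarith
    _ ≤ 2 * (p / q) := by
        gcongr <;> linarith

end NearbyQuotients

theorem nontangential_quotient_comparable_general {X : Type*} [MetricSpace X]
    (H : Set X)
    (x' : X) (a : X) (ha : a ∈ H)
    (x : X) (hx : dist x x' < infDist x' H / 3) :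
    x ∉ H ∧
      (1 / 4) * (infDist x H / dist x a) ≤ infDist x' H / dist x' a ∧
      infDist x' H / dist x' a ≤ 4 * (infDist x H / dist x a) := by
  have hinf : |infDist x H - infDist x' H| ≤ dist x x' := by
    simpa [Real.dist_eq] using (lipschitz_infDist_pt H).dist_le_mul x x'
  have hdist : |dist x a - dist x' a| ≤ dist x x' := abs_dist_sub_le x x' a
  have hle : infDist x' H ≤ dist x' a := infDist_le_dist_of_mem ha
  have hclose : 3 * dist x x' < infDist x' H := by linarith
  have hquot_nonneg (y : X) : 0 ≤ infDist y H / dist y a :=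
    div_nonneg infDist_nonneg dist_nonneg
  have hx_ball : x ∈ ball x' (infDist x' H) := by
    rw [mem_ball]; linarith [dist_nonneg (x := x) (y := x')]
  refine ⟨ball_infDist_subset_compl hx_ball, ?_, ?_⟩
  · linarith [div_le_two_mul_div_of_abs_sub_le hle hclose hinf hdist, hquot_nonneg x']
  · linarith [div_le_two_mul_div_of_abs_sub_le' hle hclose hinf hdist, hquot_nonneg x]

/-- If `x` is close to `x'` (within a third of the distance of `x'` to the
closed set `H`), then `x ∉ H` and the non-tangentiality quotients at `x` and
`x'` relative to a point `a ∈ H` are comparable up to a factor `4`. -/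
theorem nontangential_quotient_comparable {X : Type*} [MetricSpace X]
    (H : Set X) (hH : IsClosed H) (hne : H.Nonempty)
    (x' : X) (hx' : x' ∈ Hᶜ) (a : X) (ha : a ∈ H) (hax : a ≠ x')
    (x : X) (hx : dist x x' < infDist x' H / 3) :
    x ∉ H ∧
      (1 / 4) * (infDist x H / dist x a) ≤ infDist x' H / dist x' a ∧
      infDist x' H / dist x' a ≤ 4 * (infDist x H / dist x a) :=
  nontangential_quotient_comparable_general H x' a ha x hx
end

section
/- Let (X,d) be a metric space, H ⊂ X a closed set with nonempty complement, Z a normed linear space, f : ∂H → Z a function, and g : (X \ H) → Z an arbitrary (not necessarily continuous) function. Then there exists a continuous function g̃ : (X \ H) → Z such that: (i) for every a ∈ ∂H, if lim_{x→a, x∈X\H} ‖g(x) − f(a)‖ · dist(x,H)/d(x,a) = 0 then lim_{x→a, x∈X\H} ‖g̃(x) − f(a)‖ · dist(x,H)/d(x,a) = 0; (ii) for every a ∈ ∂H, if lim_{x→a, x∈X\H} g(x) = f(a) then lim_{x→a, x∈X\H} g̃(x) = f(a); and (iii) for every a ∈ H and r ∈ (0,∞) ∪ {∞}, if g is bounded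 on B(a,2r) \ H then g̃ is bounded on B(a,r) \ H. -/
/-!
Average `g` with a partition of unity on `Hᶜ` subordinate to the Whitney-type balls
`B(i, dist(i, H) / 2)`, `i ∉ H`. The average `g'` is continuous on `Hᶜ`, and `g' y` lies in every
convex set containing the values `g i` over the balls that contain `y`. On such a ball
`dist(i, H)` and `dist(i, a)` (for `a ∈ H`) are comparable to `dist(y, H)` and `dist(y, a)`, so any
ball-shaped bound on `g` near `a` passes to `g'` at the cost of a constant factor.
-/

open Filter Topology Metric ENNReal

section Averaging

variable {X Z : Type*} [PseudoMetricSpace X] [AddCommGroup Z] [Module ℝ Z]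
  [TopologicalSpace Z] [ContinuousAdd Z] [ContinuousSMul ℝ Z]

def IsLocalAverage (U : Set X) (R : X → ℝ) (g G : X → Z) : Prop :=
  ∀ y ∈ U, ∀ s : Set Z, Convex ℝ s → (∀ i ∈ U, dist y i < R i → g i ∈ s) → G y ∈ s

theorem exists_continuousOn_isLocalAverage (U : Set X) (R : X → ℝ) (hR : ∀ x ∈ U, 0 < R x)
    (g : X → Z) : ∃ G : X → Z, ContinuousOn G U ∧ IsLocalAverage U R g G := by
  classical
  obtain ⟨ρ, hρ⟩ := PartitionOfUnity.exists_isSubordinate (ι := U) (X := U) isClosed_univ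
    (fun i => ball i (R i)) (fun _ => isOpen_ball)
    (fun y _ => Set.mem_iUnion.2 ⟨y, mem_ball_self (hR y y.2)⟩)
  refine ⟨fun x => if hx : x ∈ U then ∑ᶠ i, ρ i ⟨x, hx⟩ • g i else 0, ?_, ?_⟩
  · rw [continuousOn_iff_continuous_domRestrict]
    refine (ρ.continuous_finsum_smul (g := fun i _ => g i) fun _ _ _ => continuousAt_const).congr
      fun y => ?_
    simp [Set.domRestrict, y.2]
  · intro y hy s hs hgs
    simp only [hy, dite_true]
    refine ρ.finsum_smul_mem_convex (g := fun i _ => g i) (Set.mem_univ _) (fun i hi => ?_) hs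
    exact hgs i i.2 (hρ i (subset_tsupport _ hi))

end Averaging

section WhitneyBalls

variable {X : Type*} [PseudoMetricSpace X] {H : Set X} {y i a : X}

theorem infDist_lt_two_mul_of_dist_lt_half (h : dist y i < infDist i H / 2) :
    infDist i H < 2 * infDist y H := by
  linarith [infDist_le_infDist_add_dist (s := H) (x := i) (y := y), dist_comm y i]

theorem two_mul_infDist_lt_of_dist_lt_half (h : dist y i < infDist i H / 2) :
    2 * infDist y H < 3 * infDist i H := by
  linarith [infDist_le_infDist_add_dist (s := H) (x := y) (y := i)]

theorem dist_lt_two_mul_of_dist_lt_half (ha : a ∈ H) (h : dist y i < infDist i H / 2) :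
    dist i a < 2 * dist y a := by
  linarith [infDist_lt_two_mul_of_dist_lt_half h, infDist_le_dist_of_mem (x := y) ha,
    dist_triangle i y a, dist_comm y i]

theorem edist_lt_two_mul_of_dist_lt_half (ha : a ∈ H) (h : dist y i < infDist i H / 2) :
    edist i a < 2 * edist y a := by
  have hlt := dist_lt_two_mul_of_dist_lt_half ha h
  rw [edist_dist, edist_dist, ← ENNReal.ofReal_ofNat 2, ← ENNReal.ofReal_mul zero_le_two,
    ENNReal.ofReal_lt_ofReal_iff']
  exact ⟨hlt, dist_nonneg.trans_lt hlt⟩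

theorem dist_div_infDist_lt_of_dist_lt_half (ha : a ∈ H) (h : dist y i < infDist i H / 2) :
    dist i a / infDist i H < 3 * (dist y a / infDist y H) := by
  have hi : 0 < infDist i H := by linarith [dist_nonneg (x := y) (y := i)]
  have hy : 0 < infDist y H := by linarith [infDist_lt_two_mul_of_dist_lt_half h]
  have hdist := dist_lt_two_mul_of_dist_lt_half ha h
  have hinf := two_mul_infDist_lt_of_dist_lt_half h
  rw [div_lt_iff₀ hi, mul_div_assoc', div_mul_eq_mul_div, lt_div_iff₀ hy]
  nlinarith [mul_lt_mul_of_pos_right hdist hy,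
    mul_le_mul_of_nonneg_left hinf.le (dist_nonneg (x := y) (y := a))]

end WhitneyBalls

namespace IsLocalAverage

variable {X Z : Type*} [PseudoMetricSpace X] [NormedAddCommGroup Z] [NormedSpace ℝ Z]
  {H : Set X} {g G : X → Z} {a : X}

theorem tendsto_nhdsWithin_compl (hG : IsLocalAverage Hᶜ (fun x => infDist x H / 2) g G)
    (ha : a ∈ H) {c : Z} (h : Tendsto g (𝓝[Hᶜ] a) (𝓝 c)) : Tendsto G (𝓝[Hᶜ] a) (𝓝 c) := by
  rw [Metric.tendsto_nhdsWithin_nhds] at h ⊢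
  intro ε hε
  obtain ⟨δ, hδ, hgδ⟩ := h ε hε
  refine ⟨δ / 2, half_pos hδ, fun y hy hya => ?_⟩
  exact hG y hy _ (convex_ball c ε) fun i hi hyi =>
    hgδ hi (by linarith [dist_lt_two_mul_of_dist_lt_half ha hyi])

theorem tendsto_norm_sub_mul_infDist_div_dist
    (hG : IsLocalAverage Hᶜ (fun x => infDist x H / 2) g G) (hH : IsClosed H) (ha : a ∈ H)
    {c : Z} (h : Tendsto (fun x => ‖g x - c‖ * (infDist x H / dist x a)) (𝓝[Hᶜ] a) (𝓝 0)) :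
    Tendsto (fun x => ‖G x - c‖ * (infDist x H / dist x a)) (𝓝[Hᶜ] a) (𝓝 0) := by
  rw [Metric.tendsto_nhdsWithin_nhds] at h ⊢
  intro ε hε
  obtain ⟨δ, hδ, hgδ⟩ := h (ε / 3) (by positivity)
  refine ⟨δ / 2, half_pos hδ, fun y hy hya => ?_⟩
  have hy0 : 0 < infDist y H := (hH.notMem_iff_infDist_pos ⟨a, ha⟩).1 hy
  have hya0 : 0 < dist y a := hy0.trans_le (infDist_le_dist_of_mem ha)
  have hball : G y ∈ ball c (ε * (dist y a / infDist y H)) := by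
    refine hG y hy _ (convex_ball _ _) fun i hi hyi => ?_
    have hgi := hgδ hi (by linarith [dist_lt_two_mul_of_dist_lt_half ha hyi])
    have hi0 : 0 < infDist i H := by linarith [dist_nonneg (x := y) (y := i)]
    have hia0 : 0 < dist i a := hi0.trans_le (infDist_le_dist_of_mem ha)
    rw [Real.dist_eq, sub_zero, abs_of_nonneg (by positivity)] at hgi
    rw [mem_ball, dist_eq_norm]
    calc ‖g i - c‖ = ‖g i - c‖ * (infDist i H / dist i a) * (dist i a / infDist i H) := by
          field_simp
      _ ≤ ε / 3 * (dist i a / infDist i H) := by gcongr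
      _ < ε / 3 * (3 * (dist y a / infDist y H)) := by
          gcongr; exact dist_div_infDist_lt_of_dist_lt_half ha hyi
      _ = ε * (dist y a / infDist y H) := by ring
  rw [mem_ball, dist_eq_norm] at hball
  rw [Real.dist_eq, sub_zero, abs_of_nonneg (by positivity)]
  calc ‖G y - c‖ * (infDist y H / dist y a)
      < ε * (dist y a / infDist y H) * (infDist y H / dist y a) := by gcongr
    _ = ε := by field_simp

theorem norm_le_on_eball_of_norm_le_on_eball_two_mul
    (hG : IsLocalAverage Hᶜ (fun x => infDist x H / 2) g G) (ha : a ∈ H)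
    {r : ℝ≥0∞} {M : ℝ} (h : ∀ x ∈ eball a (2 * r) \ H, ‖g x‖ ≤ M) :
    ∀ x ∈ eball a r \ H, ‖G x‖ ≤ M := by
  rintro y ⟨hyr, hy⟩
  refine mem_closedBall_zero_iff.1 <| hG y hy _ (convex_closedBall 0 M) fun i hi hyi => ?_
  refine mem_closedBall_zero_iff.2 <| h i ⟨?_, hi⟩
  calc edist i a < 2 * edist y a := edist_lt_two_mul_of_dist_lt_half ha hyi
    _ ≤ 2 * r := by gcongr; exact (mem_eball.1 hyr).le

end IsLocalAverage

theorem exists_continuous_replacement_general {X Z : Type*} [MetricSpace X]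
    [NormedAddCommGroup Z] [NormedSpace ℝ Z]
    (H : Set X) (hH : IsClosed H)
    (f : frontier H → Z) (g : X → Z) :
    ∃ g' : X → Z, ContinuousOn g' Hᶜ ∧
      -- (i)
      (∀ a, ∀ ha : a ∈ frontier H,
        Tendsto (fun x => ‖g x - f ⟨a, ha⟩‖ * (infDist x H / dist x a))
          (nhdsWithin a Hᶜ) (nhds 0) →
        Tendsto (fun x => ‖g' x - f ⟨a, ha⟩‖ * (infDist x H / dist x a))
          (nhdsWithin a Hᶜ) (nhds 0)) ∧
      -- (ii)
      (∀ a, ∀ ha : a ∈ frontier H,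
        Tendsto g (nhdsWithin a Hᶜ) (nhds (f ⟨a, ha⟩)) →
        Tendsto g' (nhdsWithin a Hᶜ) (nhds (f ⟨a, ha⟩))) ∧
      -- (iii)
      (∀ a ∈ H, ∀ r : ℝ≥0∞, 0 < r →
        (∃ M : ℝ, ∀ x ∈ EMetric.ball a (2 * r) \ H, ‖g x‖ ≤ M) →
        ∃ M : ℝ, ∀ x ∈ EMetric.ball a r \ H, ‖g' x‖ ≤ M) := by
  rcases H.eq_empty_or_nonempty with rfl | hne
  · exact ⟨0, continuousOn_const, fun a ha => by simp at ha, fun a ha => by simp at ha,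
      fun a ha => by simp at ha⟩
  obtain ⟨G, hGc, hG⟩ := exists_continuousOn_isLocalAverage Hᶜ (fun x => infDist x H / 2)
    (fun x hx => half_pos ((hH.notMem_iff_infDist_pos hne).1 hx)) g
  exact ⟨G, hGc,
    fun a ha => hG.tendsto_norm_sub_mul_infDist_div_dist hH (hH.frontier_subset ha),
    fun a ha => hG.tendsto_nhdsWithin_compl (hH.frontier_subset ha),
    fun a ha _ _ ⟨M, hM⟩ =>
      ⟨M, hG.norm_le_on_eball_of_norm_le_on_eball_two_mul ha hM⟩⟩

/-- Any function `g` on the complement of a closed set `H` can be replaced by a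
continuous one preserving the non-tangential limits, the limits, and the local
boundedness properties that `g` may have. -/
theorem exists_continuous_replacement {X Z : Type*} [MetricSpace X]
    [NormedAddCommGroup Z] [NormedSpace ℝ Z]
    (H : Set X) (hH : IsClosed H) (hcompl : Hᶜ.Nonempty)
    (f : frontier H → Z) (g : X → Z) :
    ∃ g' : X → Z, ContinuousOn g' Hᶜ ∧
      -- (i)
      (∀ a, ∀ ha : a ∈ frontier H,
        Tendsto (fun x => ‖g x - f ⟨a, ha⟩‖ * (infDist x H / dist x a))
          (nhdsWithin a Hᶜ) (nhds 0) →
        Tendsto (fun x => ‖g' x - f ⟨a, ha⟩‖ * (infDist x H / dist x a))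
          (nhdsWithin a Hᶜ) (nhds 0)) ∧
      -- (ii)
      (∀ a, ∀ ha : a ∈ frontier H,
        Tendsto g (nhdsWithin a Hᶜ) (nhds (f ⟨a, ha⟩)) →
        Tendsto g' (nhdsWithin a Hᶜ) (nhds (f ⟨a, ha⟩))) ∧
      -- (iii)
      (∀ a ∈ H, ∀ r : ℝ≥0∞, 0 < r →
        (∃ M : ℝ, ∀ x ∈ EMetric.ball a (2 * r) \ H, ‖g x‖ ≤ M) →
        ∃ M : ℝ, ∀ x ∈ EMetric.ball a r \ H, ‖g' x‖ ≤ M) :=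
  exists_continuous_replacement_general H hH f g
end

section
/- Let Y and Z be metric spaces with Z a normed linear space, and let h_n : Y → Z be a sequence of functions converging pointwise to f : Y → Z. Then the pair ({h_n}, f) has UCPC if and only if h_n converges continuously to f at every point y₀ ∈ Y at which f is continuous, i.e. for every such y₀ and every sequence (y_k) in Y with y_k → y₀ one has h_k(y_k) → f(y₀). -/
open Filter Topology

/-!
UCPC at `y₀` says exactly that `(k, y) ↦ h k y` tends to `f y₀` along `atTop ×ˢ 𝓝 y₀`.
This filter is countably generated, so convergence along it is tested on sequences `(kₙ, yₙ)`.
After passing to a subsequence with `kₙ` strictly increasing, such a sequence is a subsequence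
of a diagonal sequence `(k, y k)`: put `y kₙ = yₙ` and `y k = y₀` at all other indices.
-/

open Function

theorem Filter.Tendsto.extend_cofinite {α β X : Type*} [TopologicalSpace X] {φ : α → β}
    (hφ : Injective φ) {z : α → X} {a : X} (hz : Tendsto z cofinite (𝓝 a)) :
    Tendsto (extend φ z fun _ => a) cofinite (𝓝 a) := by
  intro U hU
  refine ((hz hU).image φ).subset fun b hb => ?_
  by_cases hb' : ∃ n, φ n = b
  · obtain ⟨n, rfl⟩ := hb'
    exact ⟨n, by simpa [hφ.extend_apply] using hb, rfl⟩
  · exact absurd (mem_of_mem_nhds hU) (by simpa [extend_apply' _ _ _ hb'] using hb)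

theorem tendsto_uncurry_atTop_prod_nhds_iff {Y X : Type*} [TopologicalSpace Y]
    [FirstCountableTopology Y] {h : ℕ → Y → X} {y₀ : Y} {l : Filter X} :
    Tendsto (uncurry h) (atTop ×ˢ 𝓝 y₀) l ↔
      ∀ y : ℕ → Y, Tendsto y atTop (𝓝 y₀) → Tendsto (fun k => h k (y k)) atTop l := by
  refine ⟨fun H y hy => H.comp (tendsto_id.prodMk hy), fun H => ?_⟩
  refine tendsto_of_subseq_tendsto fun ns hns => ?_
  obtain ⟨ms, hms, hφ⟩ := strictMono_subseq_of_tendsto_atTop (tendsto_fst.comp hns)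
  have hz : Tendsto (fun n => (ns (ms n)).2) atTop (𝓝 y₀) :=
    (tendsto_snd.comp hns).comp hms.tendsto_atTop
  rw [← Nat.cofinite_eq_atTop] at hz
  have hy := hz.extend_cofinite hφ.injective
  rw [Nat.cofinite_eq_atTop] at hy
  refine ⟨ms, ((H _ hy).comp hφ.tendsto_atTop).congr fun n => ?_⟩
  exact congrArg (h _) (hφ.injective.extend_apply _ _ n)

theorem UCPC_iff_tendsto_uncurry {Y Z : Type*} [TopologicalSpace Y] [NormedAddCommGroup Z]
    {h : ℕ → Y → Z} {f : Y → Z} :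
    UCPC h f ↔ ∀ y₀, ContinuousAt f y₀ → Tendsto (uncurry h) (atTop ×ˢ 𝓝 y₀) (𝓝 (f y₀)) := by
  refine forall₂_congr fun y₀ _ => ?_
  rw [(atTop_basis.prod (𝓝 y₀).basis_sets).tendsto_iff Metric.nhds_basis_ball]
  simp only [true_and, Set.mem_prod, Set.mem_Ici, Metric.mem_ball, dist_eq_norm, and_imp,
    Prod.forall, Prod.exists, id, uncurry_apply_pair]
  exact forall₂_congr fun ε _ => exists_congr fun k₀ => exists_congr fun U =>
    and_congr_right fun _ => ⟨fun H k y hk hy => H k hk y hy, fun H k hk y hy => H k y hk hy⟩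

theorem UCPC_iff_continuous_convergence_general {Y Z : Type*}
    [MetricSpace Y] [NormedAddCommGroup Z]
    (h : ℕ → Y → Z) (f : Y → Z) :
    UCPC h f ↔
      ∀ y₀, ContinuousAt f y₀ → ∀ y : ℕ → Y, Tendsto y atTop (nhds y₀) →
        Tendsto (fun k => h k (y k)) atTop (nhds (f y₀)) := by
  rw [UCPC_iff_tendsto_uncurry]
  exact forall₂_congr fun y₀ _ => tendsto_uncurry_atTop_prod_nhds_iff

/-- For a pointwise convergent sequence, UCPC is equivalent to continuous
convergence at every continuity point of the limit. -/
theorem UCPC_iff_continuous_convergence {Y Z : Type*}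
    [MetricSpace Y] [NormedAddCommGroup Z] [NormedSpace ℝ Z]
    (h : ℕ → Y → Z) (f : Y → Z)
    (hconv : ∀ y, Tendsto (fun n => h n y) atTop (nhds (f y))) :
    UCPC h f ↔
      ∀ y₀, ContinuousAt f y₀ → ∀ y : ℕ → Y, Tendsto y atTop (nhds y₀) →
        Tendsto (fun k => h k (y k)) atTop (nhds (f y₀)) :=
  UCPC_iff_continuous_convergence_general h f
end

section
/- Let Y be a metric space, Z a normed linear space, f : Y → Z a function, and h_n : Y → Z a sequence of continuous functions such that the pair ({h_n}, f) has UCPC and such that h_n(y) → f(y) for every y at which f is continuous. For n ∈ ℕ let P_n : Z → Z be the radial projection onto the closed ball of radius n, i.e. P_n(z) = z if ‖z‖ < n and P_n(z) = n·z/‖z‖ otherwise, and set h̃_n = P_n ∘ h_n. Then each h̃_n is continuous and bounded (with ‖h̃_n‖ ≤ n everywhere), h̃_n(y) → z whenever y ∈ Y, z ∈ Z and h_n(y) → z, and the pair ({h̃_n}, f) has UCPC. -/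
/-! Inside the open ball of radius `n` the radial projection `P n` is the identity. Both a
convergent sequence `h n y → z` and, by UCPC, the values `h k y` for `y` near a continuity point
`y₀` and `k` large stay within a fixed bound (`‖z‖ + 1`, resp. `‖f y₀‖ + ε`), so for large `n`
the truncation does not change them at all. -/

open Filter Topology

section RadialProj

variable {Z : Type*} [NormedAddCommGroup Z] [NormedSpace ℝ Z]

noncomputable def radialProj (r : ℝ) (z : Z) : Z :=
  if ‖z‖ < r then z else (r / ‖z‖) • z

theorem radialProj_of_norm_lt {r : ℝ} {z : Z} (hz : ‖z‖ < r) : radialProj r z = z :=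
  if_pos hz

theorem radialProj_eq_smul (r : ℝ) (z : Z) : radialProj r z = (r / max r ‖z‖) • z := by
  unfold radialProj
  split_ifs with hz
  · have hr : r ≠ 0 := ((norm_nonneg z).trans_lt hz).ne'
    rw [max_eq_left hz.le, div_self hr, one_smul]
  · rw [max_eq_right (not_lt.mp hz)]

theorem norm_radialProj_le {r : ℝ} (hr : 0 ≤ r) (z : Z) : ‖radialProj r z‖ ≤ r := by
  rw [radialProj_eq_smul, norm_smul, Real.norm_of_nonneg (by positivity)]
  rcases eq_or_lt_of_le hr with rfl | hr
  · simp
  · calc r / max r ‖z‖ * ‖z‖ ≤ r / max r ‖z‖ * max r ‖z‖ := by gcongr; exact le_max_right _ _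
      _ = r := div_mul_cancel₀ r (hr.trans_le (le_max_left _ _)).ne'

theorem continuous_radialProj {r : ℝ} (hr : 0 ≤ r) : Continuous (radialProj (Z := Z) r) := by
  simp_rw [funext (radialProj_eq_smul (Z := Z) r)]
  rcases eq_or_lt_of_le hr with rfl | hr
  · simpa using continuous_const
  · exact (continuous_const.div (continuous_const.max continuous_norm)
      fun z ↦ (hr.trans_le (le_max_left _ _)).ne').smul continuous_id

theorem tendsto_radialProj_natCast {u : ℕ → Z} {z : Z} (hu : Tendsto u atTop (𝓝 z)) :
    Tendsto (fun n : ℕ ↦ radialProj (n : ℝ) (u n)) atTop (𝓝 z) := by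
  have hbdd : ∀ᶠ n in atTop, ‖u n‖ < ‖z‖ + 1 :=
    (continuous_norm.tendsto z |>.comp hu).eventually (eventually_lt_nhds (lt_add_one _))
  have hlarge : ∀ᶠ n : ℕ in atTop, ‖z‖ + 1 < n :=
    tendsto_natCast_atTop_atTop.eventually_gt_atTop _
  refine hu.congr' ?_
  filter_upwards [hbdd, hlarge] with n hn hn'
  exact (radialProj_of_norm_lt (hn.trans hn')).symm

theorem UCPC.radialProj {Y : Type*} [TopologicalSpace Y] {h : ℕ → Y → Z} {f : Y → Z}
    (hUCPC : UCPC h f) : UCPC (fun n y ↦ radialProj n (h n y)) f := by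
  intro y₀ hy₀ ε hε
  obtain ⟨k₀, U, hU, hclose⟩ := hUCPC y₀ hy₀ ε hε
  obtain ⟨k₁, hk₁⟩ := eventually_atTop.mp ((eventually_ge_atTop k₀).and
    (tendsto_natCast_atTop_atTop.eventually_gt_atTop (‖f y₀‖ + ε)))
  refine ⟨k₁, U, hU, fun k hk y hy ↦ ?_⟩
  obtain ⟨hk₀, hlarge⟩ := hk₁ k hk
  have hky := hclose k hk₀ y hy
  have hbdd : ‖h k y‖ < ‖f y₀‖ + ε := by linarith [norm_sub_norm_le (h k y) (f y₀)]
  dsimp only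
  rwa [radialProj_of_norm_lt (hbdd.trans hlarge)]

end RadialProj

theorem radial_truncation_preserves_UCPC_general {Y Z : Type*}
    [MetricSpace Y] [NormedAddCommGroup Z] [NormedSpace ℝ Z]
    (f : Y → Z) (h : ℕ → Y → Z) (hcont : ∀ n, Continuous (h n))
    (hUCPC : UCPC h f)
    (P : ℕ → Z → Z)
    (hP : ∀ n z, P n z = if ‖z‖ < (n : ℝ) then z else ((n : ℝ) / ‖z‖) • z)
    (h' : ℕ → Y → Z) (hh' : ∀ n y, h' n y = P n (h n y)) :
    (∀ n, Continuous (h' n)) ∧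
    (∀ n y, ‖h' n y‖ ≤ (n : ℝ)) ∧
    (∀ y, ∀ z : Z, Tendsto (fun n => h n y) atTop (nhds z) →
      Tendsto (fun n => h' n y) atTop (nhds z)) ∧
    UCPC h' f := by
  obtain rfl : P = fun n : ℕ ↦ radialProj (n : ℝ) := funext₂ hP
  obtain rfl : h' = fun (n : ℕ) y ↦ radialProj (n : ℝ) (h n y) := funext₂ hh'
  exact ⟨fun n ↦ (continuous_radialProj n.cast_nonneg).comp (hcont n),
    fun n y ↦ norm_radialProj_le n.cast_nonneg _,
    fun y _ ↦ tendsto_radialProj_natCast,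
    hUCPC.radialProj⟩

/-- Truncating a sequence of continuous functions with UCPC by the radial
projections `P n` onto the closed balls of radius `n` yields a sequence of
bounded continuous functions that still converges wherever the original one
does and still has UCPC. -/
theorem radial_truncation_preserves_UCPC {Y Z : Type*}
    [MetricSpace Y] [NormedAddCommGroup Z] [NormedSpace ℝ Z]
    (f : Y → Z) (h : ℕ → Y → Z) (hcont : ∀ n, Continuous (h n))
    (hUCPC : UCPC h f)
    (hconv : ∀ y, ContinuousAt f y → Tendsto (fun n => h n y) atTop (nhds (f y)))
    (P : ℕ → Z → Z)
    (hP : ∀ n z, P n z = if ‖z‖ < (n : ℝ) then z else ((n : ℝ) / ‖z‖) • z)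
    (h' : ℕ → Y → Z) (hh' : ∀ n y, h' n y = P n (h n y)) :
    (∀ n, Continuous (h' n)) ∧
    (∀ n y, ‖h' n y‖ ≤ (n : ℝ)) ∧
    (∀ y, ∀ z : Z, Tendsto (fun n => h n y) atTop (nhds z) →
      Tendsto (fun n => h' n y) atTop (nhds z)) ∧
    UCPC h' f :=
  radial_truncation_preserves_UCPC_general f h hcont hUCPC P hP h' hh'
end
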